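/- arXiv:math/0312467 — 7 statements merged into one kernel-verified Lean document; each statement's English description precedes it below -/
import Mathlib

section
/- If a family of pairwise nonintersecting t-dimensional subspaces of GF(q)^m has size (q^m - 1)/(q^t - 1), then t divides m. -/
/-!
Write `m = t a + r` with `0 ≤ r < t`. The members of the family cover `(q^t - 1) |S|` nonzero vectors,
so with `|S| = ⌊(q^m - 1)/(q^t - 1)⌋` exactly `(q^m - 1) mod (q^t - 1) = q^r - 1` nonzero vectors
are left uncovered (the holes). A hyperplane `Y` meets every member in dimension at least `t - 1`;
counting the holes in `V` and in `Y` then shows that `q^(t-1)` divides the number of holes off `Y`.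
As there are fewer than `q^r ≤ q^(t-1)` holes, none lies off any hyperplane, so there are none,
and `q^r = 1` forces `r = 0`.
-/

open Finset Module

theorem exists_finrank_add_one_eq_and_notMem {K V : Type*} [Field K] [AddCommGroup V] [Module K V]
    [FiniteDimensional K V] {v : V} (hv : v ≠ 0) :
    ∃ Y : Submodule K V, finrank K Y + 1 = finrank K V ∧ v ∉ Y := by
  obtain ⟨f, hf⟩ := Projective.exists_dual_ne_zero K hv
  exact ⟨LinearMap.ker f, Dual.finrank_ker_add_one_of_ne_zero (by rintro rfl; exact hf rfl), hf⟩

section Holes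

open scoped Classical

variable {F V : Type*} [Field F] [AddCommGroup V] [Module F V] [Fintype V]

noncomputable def punctured (U : Submodule F V) : Finset V := {v | v ∈ U ∧ v ≠ 0}

noncomputable def holes (S : Finset (Submodule F V)) : Finset V := {v | v ≠ 0 ∧ ∀ W ∈ S, v ∉ W}

theorem mem_holes {S : Finset (Submodule F V)} {v : V} : v ∈ holes S ↔ v ≠ 0 ∧ ∀ W ∈ S, v ∉ W := by
  simp [holes]

theorem card_punctured_add_one [Fintype F] (U : Submodule F V) :
    #(punctured U) + 1 = Fintype.card F ^ finrank F U := by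
  have h : punctured U = ({v | v ∈ U} : Finset V).erase 0 := by
    ext v; simp [punctured, and_comm]
  rw [h, card_erase_add_one (by simp), ← card_eq_pow_finrank, Fintype.card_subtype]

theorem card_punctured_eq_sum_add_card_holes {S : Finset (Submodule F V)}
    (hS : (S : Set (Submodule F V)).PairwiseDisjoint id) (Y : Submodule F V) :
    #(punctured Y) = ∑ W ∈ S, #(punctured (W ⊓ Y)) + #{v ∈ holes S | v ∈ Y} := by
  have hblocks : (S : Set (Submodule F V)).PairwiseDisjoint fun W ↦ punctured (W ⊓ Y) := by
    intro W hW W' hW' hne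
    refine disjoint_left.2 fun v hv hv' ↦ ?_
    simp only [punctured, mem_filter, Submodule.mem_inf] at hv hv'
    exact hv.2.2 (Submodule.disjoint_def.1 (hS hW hW' hne) v hv.2.1.1 hv'.2.1.1)
  have hrest : Disjoint (S.biUnion fun W ↦ punctured (W ⊓ Y)) {v ∈ holes S | v ∈ Y} := by
    refine disjoint_left.2 fun v hv hv' ↦ ?_
    simp only [punctured, holes, mem_biUnion, mem_filter, Submodule.mem_inf] at hv hv'
    obtain ⟨W, hW, -, ⟨hvW, -⟩, -⟩ := hv
    exact hv'.1.2.2 W hW hvW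
  rw [← card_biUnion hblocks, ← card_union_of_disjoint hrest]
  congr 1
  ext v
  simp only [punctured, holes, mem_union, mem_biUnion, mem_filter, mem_univ, true_and,
    Submodule.mem_inf]
  grind

theorem pow_sub_one_mul_card_add_card_holes [Fintype F] {S : Finset (Submodule F V)}
    (hS : (S : Set (Submodule F V)).PairwiseDisjoint id) {t : ℕ}
    (hdim : ∀ W ∈ S, finrank F W = t) :
    (Fintype.card F ^ t - 1) * #S + #(holes S) = Fintype.card F ^ finrank F V - 1 := by
  have hcount := card_punctured_eq_sum_add_card_holes hS ⊤
  have hW : ∀ W ∈ S, #(punctured (W ⊓ ⊤)) = Fintype.card F ^ t - 1 := fun W hW ↦ by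
    rw [inf_top_eq, ← hdim W hW, ← card_punctured_add_one, Nat.add_sub_cancel]
  rw [sum_congr rfl hW, sum_const, smul_eq_mul,
    filter_true_of_mem fun v _ ↦ Submodule.mem_top] at hcount
  rw [← finrank_top F V, ← card_punctured_add_one, Nat.add_sub_cancel, hcount, mul_comm]

theorem pow_dvd_card_holes_filter_notMem [Fintype F] {S : Finset (Submodule F V)}
    (hS : (S : Set (Submodule F V)).PairwiseDisjoint id) {t : ℕ}
    (hdim : ∀ W ∈ S, finrank F W = t) (ht : t ≤ finrank F V) {Y : Submodule F V}
    (hY : finrank F Y + 1 = finrank F V) :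
    Fintype.card F ^ (t - 1) ∣ #{v ∈ holes S | v ∉ Y} := by
  have hall := pow_sub_one_mul_card_add_card_holes hS hdim
  have hinY := card_punctured_eq_sum_add_card_holes hS Y
  have hsplit := card_filter_add_card_filter_not (s := holes S) (· ∈ Y)
  set q := Fintype.card F
  set n := finrank F V
  have hmeet : ∀ W ∈ S, t - 1 ≤ finrank F ↥(W ⊓ Y) := fun W hW ↦ by
    have := Submodule.finrank_sup_add_finrank_inf_eq W Y
    have := (W ⊔ Y).finrank_le
    have := hdim W hW
    omega
  have hq : 0 < q := Fintype.card_pos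
  zify [Nat.one_le_pow t q hq, Nat.one_le_pow n q hq] at hall
  have hpunct : ∀ U : Submodule F V, (#(punctured U) : ℤ) = q ^ finrank F U - 1 := fun U ↦ by
    have := card_punctured_add_one U
    zify at this
    linarith
  have hkey : (#{v ∈ holes S | v ∉ Y} : ℤ) =
      q ^ n - q ^ (n - 1) - q ^ t * #S + ∑ W ∈ S, (q : ℤ) ^ finrank F ↥(W ⊓ Y) := by
    have hY' : finrank F Y = n - 1 := by omega
    have h := congrArg (Nat.cast : ℕ → ℤ) hinY
    push_cast at h
    simp only [hpunct, hY', sum_sub_distrib, sum_const, nsmul_eq_mul, mul_one] at h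
    zify at hsplit
    linear_combination hall + h + hsplit
  rw [← Int.natCast_dvd_natCast]
  push_cast
  rw [hkey]
  refine dvd_add (dvd_sub (dvd_sub ?_ ?_) ?_) (dvd_sum fun W hW ↦ pow_dvd_pow _ (hmeet W hW))
  · exact pow_dvd_pow _ (by omega)
  · exact pow_dvd_pow _ (by omega)
  · exact (pow_dvd_pow _ (Nat.sub_le t 1)).mul_right _

end Holes

/-- If a family of pairwise nonintersecting `t`-dimensional subspaces of `GF(q)^m`
has size `(q^m-1)/(q^t-1)`, then `t` divides `m`. -/
theorem stmt_2 (q t m : ℕ) (ht : 1 ≤ t) (htm : t ≤ m)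
    (F : Type*) [Field F] [Fintype F] (hq : Fintype.card F = q)
    (S : Finset (Submodule F (Fin m → F)))
    (hdim : ∀ W ∈ S, Module.finrank F W = t)
    (hpair : ∀ W ∈ S, ∀ W' ∈ S, W ≠ W' → W ⊓ W' = ⊥)
    (hcard : S.card = (q ^ m - 1) / (q ^ t - 1)) :
    t ∣ m := by
  classical
  have hS : (S : Set (Submodule F (Fin m → F))).PairwiseDisjoint id :=
    fun W hW W' hW' hne ↦ disjoint_iff.2 (hpair W hW W' hW' hne)
  have hfin : finrank F (Fin m → F) = m := finrank_fin_fun F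
  have hholes : #(holes S) = q ^ (m % t) - 1 := by
    have h := pow_sub_one_mul_card_add_card_holes hS hdim
    rw [hfin, hq, hcard] at h
    rw [← Nat.pow_sub_one_mod_pow_sub_one]
    exact Nat.add_left_cancel (h.trans (Nat.div_add_mod _ _).symm)
  by_contra hndvd
  have hr : 0 < m % t := Nat.pos_of_ne_zero fun h ↦ hndvd (Nat.dvd_of_mod_eq_zero h)
  have hq1 : 1 < q := hq ▸ Fintype.one_lt_card
  have hholes_lt : #(holes S) < q ^ (t - 1) := by
    rw [hholes]
    exact (Nat.sub_lt (by positivity) one_pos).trans_le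
      (Nat.pow_le_pow_right hq1.le (Nat.le_sub_one_of_lt (Nat.mod_lt m ht)))
  obtain ⟨v, hv⟩ : (holes S).Nonempty := by
    rw [← card_pos, hholes]
    exact Nat.sub_pos_of_lt (Nat.one_lt_pow hr.ne' hq1)
  obtain ⟨Y, hY, hvY⟩ := exists_finrank_add_one_eq_and_notMem (K := F) (mem_holes.1 hv).1
  have hdvd := hq ▸ pow_dvd_card_holes_filter_notMem hS hdim (by rwa [hfin]) hY
  have hpos : 0 < #{w ∈ holes S | w ∉ Y} := card_pos.2 ⟨v, mem_filter.2 ⟨hv, hvY⟩⟩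
  exact (Nat.le_of_dvd hpos hdvd).not_gt ((card_filter_le _ _).trans_lt hholes_lt)
end

section
/- Let φ : Z[μ] → GF(q) be a surjective ring homomorphism, where μ is a root of unity and q a prime power. If A1, A2 are t × m matrices over Z[μ] whose entrywise images φ(A1), φ(A2) generate nonintersecting t-dimensional subspaces of GF(q)^m, then the row spaces of A1 and A2 over the field of fractions (or over ℂ, via an embedding) are nonintersecting t-dimensional subspaces. -/
open Matrix Submodule Set Module

section aux

variable {K : Type*} [Field K] {ι κ : Type*} [Fintype ι] [Fintype κ] [DecidableEq ι]

lemma aux_rank_of_li (M : Matrix ι κ K) (h : LinearIndependent K (fun i => M i)) :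
    M.rank = Fintype.card ι := by
  rw [Matrix.rank_eq_finrank_span_row]
  exact ((linearIndependent_iff_card_eq_finrank_span.mp h).symm : _)

lemma aux_li_of_rank (M : Matrix ι κ K) (h : M.rank = Fintype.card ι) :
    LinearIndependent K (fun i => M i) := by
  rw [linearIndependent_iff_card_eq_finrank_span]
  rw [Matrix.rank_eq_finrank_span_row] at h
  exact h.symm

lemma aux_exists_det_ne_zero (M : Matrix ι κ K)
    (h : LinearIndependent K (fun i => M i)) :
    ∃ f : ι → κ, (M.submatrix id f).det ≠ 0 := by
  classical
  have hrank : M.rank = Fintype.card ι := aux_rank_of_li M h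
  have hcols : Submodule.span K (Set.range Mᵀ) = ⊤ := by
    apply Submodule.eq_top_of_finrank_eq
    show finrank K (span K (Set.range Mᵀ.row)) = _
    rw [← Matrix.rank_eq_finrank_span_row Mᵀ, Matrix.rank_transpose, hrank,
      Module.finrank_pi]
  obtain ⟨b, hbsub, hbspan, hbindep⟩ := exists_linearIndependent K (Set.range Mᵀ)
  rw [hcols] at hbspan
  haveI : Fintype b := ((Set.finite_range Mᵀ).subset hbsub).fintype
  have hcard : Fintype.card ι = Fintype.card b := by
    have h1 := finrank_span_set_eq_card hbindep
    rw [hbspan] at h1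
    rw [← Set.toFinset_card, ← h1, finrank_top, Module.finrank_pi]
  let e : ι ≃ b := Fintype.equivOfCardEq hcard
  choose g hg using fun (x : b) => hbsub x.2
  refine ⟨fun j => g (e j), ?_⟩
  have hcolsli : LinearIndependent K (fun j : ι => Mᵀ (g (e j))) := by
    have heq : (fun j : ι => Mᵀ (g (e j))) = (fun x : b => (x : ι → K)) ∘ e := by
      funext j; exact hg (e j)
    rw [heq]
    exact hbindep.comp e e.injective
  have hu : IsUnit (M.submatrix id fun j => g (e j)) := by
    rw [← Matrix.linearIndependent_cols_iff_isUnit]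
    exact hcolsli
  rw [Matrix.isUnit_iff_isUnit_det, isUnit_iff_ne_zero] at hu
  exact hu

lemma aux_li_of_det_ne_zero (M : Matrix ι κ K) (f : ι → κ)
    (h : (M.submatrix id f).det ≠ 0) : LinearIndependent K (fun i => M i) := by
  have hu : IsUnit (M.submatrix id f) := by
    rwa [Matrix.isUnit_iff_isUnit_det, isUnit_iff_ne_zero]
  have hli : LinearIndependent K (fun i => (M.submatrix id f) i) :=
    Matrix.linearIndependent_rows_iff_isUnit.mpr hu
  exact LinearIndependent.of_comp (LinearMap.funLeft K K f) hli

lemma aux_stacked {t : ℕ} (M1 M2 : Matrix (Fin t) κ K) :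
    LinearIndependent K
        (fun i => (Matrix.of (Sum.elim M1 M2) : Matrix (Fin t ⊕ Fin t) κ K) i) ↔
      M1.rank = t ∧ M2.rank = t ∧
        LinearMap.range M1.vecMulLinear ⊓ LinearMap.range M2.vecMulLinear = ⊥ := by
  rw [linearIndependent_sum]
  have e1 : (fun i => (Matrix.of (Sum.elim M1 M2) : Matrix (Fin t ⊕ Fin t) κ K) i) ∘
      Sum.inl = fun i => M1 i := rfl
  have e2 : (fun i => (Matrix.of (Sum.elim M1 M2) : Matrix (Fin t ⊕ Fin t) κ K) i) ∘
      Sum.inr = fun i => M2 i := rfl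
  rw [e1, e2, range_vecMulLinear, range_vecMulLinear, disjoint_iff]
  constructor
  · rintro ⟨ha, hb, hc⟩
    exact ⟨by simpa using aux_rank_of_li M1 ha, by simpa using aux_rank_of_li M2 hb, hc⟩
  · rintro ⟨ha, hb, hc⟩
    exact ⟨aux_li_of_rank M1 (by simpa using ha), aux_li_of_rank M2 (by simpa using hb), hc⟩

end aux

/-- Lifting: if `φ : ℤ[μ] → GF(q)` is a surjective ring homomorphism and the images
of `A1, A2` generate nonintersecting `t`-dimensional subspaces of `GF(q)^m`, then the
row spaces of `A1, A2` over `ℂ` are nonintersecting `t`-dimensional subspaces. -/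
theorem stmt_6 (n q t m : ℕ) (hn : 1 ≤ n) (μ : ℂ) (hμ : IsPrimitiveRoot μ n)
    (F : Type*) [Field F] [Fintype F] (hq : Fintype.card F = q)
    (φ : (Algebra.adjoin ℤ ({μ} : Set ℂ)) →+* F) (hφ : Function.Surjective φ)
    (A1 A2 : Matrix (Fin t) (Fin m) (Algebra.adjoin ℤ ({μ} : Set ℂ)))
    (h1 : (A1.map φ).rank = t) (h2 : (A2.map φ).rank = t)
    (hint : LinearMap.range (A1.map φ).vecMulLinear ⊓
      LinearMap.range (A2.map φ).vecMulLinear = ⊥) :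
    (A1.map (fun x => (x : ℂ))).rank = t ∧
    (A2.map (fun x => (x : ℂ))).rank = t ∧
    LinearMap.range (A1.map (fun x => (x : ℂ))).vecMulLinear ⊓
      LinearMap.range (A2.map (fun x => (x : ℂ))).vecMulLinear = ⊥ := by
  classical
  let ψ : (Algebra.adjoin ℤ ({μ} : Set ℂ)) →+* ℂ := (Algebra.adjoin ℤ ({μ} : Set ℂ)).val.toRingHom
  let B : Matrix (Fin t ⊕ Fin t) (Fin m) (Algebra.adjoin ℤ ({μ} : Set ℂ)) := Matrix.of (Sum.elim A1 A2)
  -- image of B under φ is the stacked matrix of the images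
  have hBφ : B.map φ = Matrix.of (Sum.elim (A1.map φ) (A2.map φ)) := by
    ext i j; cases i <;> rfl
  have hBψ : B.map ψ = Matrix.of (Sum.elim (A1.map fun x => (x : ℂ))
      (A2.map fun x => (x : ℂ))) := by
    ext i j; cases i <;> rfl
  -- rows of B.map φ are linearly independent
  have hliF : LinearIndependent F (fun i => (B.map φ) i) := by
    rw [hBφ]
    exact (aux_stacked (A1.map φ) (A2.map φ)).mpr ⟨h1, h2, hint⟩
  obtain ⟨f, hf⟩ := aux_exists_det_ne_zero (B.map φ) hliF
  -- the corresponding determinant over R is nonzero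
  have hdR : (B.submatrix id f).det ≠ 0 := by
    intro h0
    apply hf
    have : (B.map φ).submatrix id f = (B.submatrix id f).map φ := rfl
    rw [this, ← RingHom.mapMatrix_apply, ← RingHom.map_det, h0, map_zero]
  have hdC : ((B.map ψ).submatrix id f).det ≠ 0 := by
    have : (B.map ψ).submatrix id f = (B.submatrix id f).map ψ := rfl
    rw [this, ← RingHom.mapMatrix_apply, ← RingHom.map_det]
    intro h0
    exact hdR (Subtype.ext h0)
  have hliC : LinearIndependent ℂ (fun i => (B.map ψ) i) :=
    aux_li_of_det_ne_zero (B.map ψ) f hdC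
  rw [hBψ] at hliC
  exact (aux_stacked _ _).mp hliC
end

section
/- Any family of pairwise nonintersecting t-dimensional subspaces of ℂ^m, each generated by t vectors with coordinates in a finite set A ⊂ ℂ closed under multiplication by a primitive |A|-th root of unity (|A|-th roots of unity), has size at most |A|^{m−1}/t. -/
/-- Any family of pairwise nonintersecting `t`-dimensional subspaces of `ℂ^m`, each
generated by `t` vectors with coordinates in the set `A` of complex `|A|`-th roots of
unity, has size at most `|A|^(m-1) / t`. -/
theorem stmt_9 (t m : ℕ) (ht : 1 ≤ t) (hm : 1 ≤ m)
    (A : Finset ℂ) (hA : 0 < A.card)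
    (hroots : ∀ z : ℂ, z ∈ A ↔ z ^ A.card = 1)
    (S : Finset (Submodule ℂ (Fin m → ℂ)))
    (hgen : ∀ W ∈ S, ∃ v : Fin t → (Fin m → ℂ),
      (∀ j i, v j i ∈ A) ∧ W = Submodule.span ℂ (Set.range v) ∧
      Module.finrank ℂ W = t)
    (hpair : ∀ W ∈ S, ∀ W' ∈ S, W ≠ W' → W ⊓ W' = ⊥) :
    S.card ≤ A.card ^ (m - 1) / t := by
  haveI : NeZero m := ⟨by omega⟩
  -- elements of A are nonzero
  have hAne : ∀ a ∈ A, a ≠ 0 := by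
    intro a ha h0
    rw [hroots] at ha
    rw [h0, zero_pow (by omega)] at ha
    exact one_ne_zero ha.symm
  classical
  choose v hvA hvspan hvrank using hgen
  -- linear independence of the generators
  have hli : ∀ W (hW : W ∈ S), LinearIndependent ℂ (v W hW) := by
    intro W hW
    rw [linearIndependent_iff_card_eq_finrank_span]
    rw [Fintype.card_fin]
    have := hvrank W hW
    rw [hvspan W hW] at this
    exact this.symm
  have hvmem : ∀ W (hW : W ∈ S) j, v W hW j ∈ W := by
    intro W hW j
    have h : v W hW j ∈ Submodule.span ℂ (Set.range (v W hW)) :=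
      Submodule.subset_span (Set.mem_range_self j)
    rw [← hvspan W hW] at h
    exact h
  -- the target finset: vectors in A^m with first coordinate 1
  set T : Finset (Fin m → ℂ) :=
    Fintype.piFinset (fun i => if i = 0 then ({1} : Finset ℂ) else A) with hT
  have hTcard : T.card = A.card ^ (m - 1) := by
    rw [hT, Fintype.card_piFinset]
    have h0 : (0 : Fin m) ∈ Finset.univ := Finset.mem_univ _
    rw [← Finset.mul_prod_erase Finset.univ _ h0, if_pos rfl, Finset.card_singleton,
      one_mul, Finset.prod_congr rfl (fun i hi => by
        rw [if_neg (Finset.ne_of_mem_erase hi)]),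
      Finset.prod_const, Finset.card_erase_of_mem h0, Finset.card_univ,
      Fintype.card_fin]
  -- the injection
  set f : Fin t × Submodule ℂ (Fin m → ℂ) → (Fin m → ℂ) := fun p =>
    if h : p.2 ∈ S then (v p.2 h p.1 0)⁻¹ • v p.2 h p.1 else 0 with hf
  have key : ((Finset.univ : Finset (Fin t)) ×ˢ S).card ≤ T.card := by
    apply Finset.card_le_card_of_injOn f
    · rintro ⟨j, W⟩ hp
      rw [Finset.mem_coe, Finset.mem_product] at hp
      have hW : W ∈ S := hp.2
      rw [hf]
      simp only [dif_pos hW]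
      have h0A : v W hW j 0 ∈ A := hvA W hW j 0
      have h0ne : v W hW j 0 ≠ 0 := hAne _ h0A
      rw [hT, Finset.mem_coe, Fintype.mem_piFinset]
      intro i
      by_cases hi : i = 0
      · subst hi
        rw [if_pos rfl, Finset.mem_singleton]
        show (v W hW j 0)⁻¹ * v W hW j 0 = 1
        exact inv_mul_cancel₀ h0ne
      · simp only [if_neg hi, Pi.smul_apply, smul_eq_mul]
        rw [hroots]
        rw [mul_pow, inv_pow, (hroots _).1 h0A, (hroots _).1 (hvA W hW j i), inv_one,
          one_mul]
    · rintro ⟨j, W⟩ hp ⟨k, W'⟩ hq heq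
      simp only [Finset.coe_product, Set.mem_prod, Finset.mem_coe] at hp hq
      have hW : W ∈ S := hp.2
      have hW' : W' ∈ S := hq.2
      rw [hf] at heq
      simp only [dif_pos hW, dif_pos hW'] at heq
      have h0ne : v W hW j 0 ≠ 0 := hAne _ (hvA W hW j 0)
      have h0ne' : v W' hW' k 0 ≠ 0 := hAne _ (hvA W' hW' k 0)
      -- the common vector w
      set w := (v W hW j 0)⁻¹ • v W hW j with hw
      have hwne : w ≠ 0 := by
        intro h
        apply h0ne
        have := congrFun h 0
        simp only [hw, Pi.smul_apply, smul_eq_mul, Pi.zero_apply] at this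
        rcases mul_eq_zero.1 this with h1 | h1
        · exact absurd h1 (inv_ne_zero h0ne)
        · exact h1
      have hwW : w ∈ W := Submodule.smul_mem _ _ (hvmem W hW j)
      have hwW' : w ∈ W' := by
        rw [heq]
        exact Submodule.smul_mem _ _ (hvmem W' hW' k)
      have hWW' : W = W' := by
        by_contra hne
        have := hpair W hW W' hW' hne
        have : w ∈ W ⊓ W' := ⟨hwW, hwW'⟩
        rw [hpair W hW W' hW' hne] at this
        exact hwne (Submodule.mem_bot ℂ |>.1 this)
      subst hWW'
      have hjk : j = k := by
        by_contra hjk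
        -- v j = c • v k with c ≠ 0
        have hc : v W hW j = ((v W hW j 0) * (v W hW k 0)⁻¹) • v W hW k := by
          calc v W hW j = (v W hW j 0) • w := by
                rw [hw, smul_smul, mul_inv_cancel₀ h0ne, one_smul]
            _ = (v W hW j 0) • ((v W hW k 0)⁻¹ • v W hW k) := by rw [heq]
            _ = _ := by rw [smul_smul]
        have hli' := Fintype.linearIndependent_iff.1 (hli W hW)
          (fun i => if i = j then 1 else if i = k then -((v W hW j 0) * (v W hW k 0)⁻¹) else 0)
        have hsum : ∑ i, (if i = j then (1:ℂ) else if i = k then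
            -((v W hW j 0) * (v W hW k 0)⁻¹) else 0) • v W hW i = 0 := by
          rw [Finset.sum_eq_add_of_mem j k (Finset.mem_univ _) (Finset.mem_univ _) hjk
            (by
              intro i _ hi
              simp only [if_neg hi.1, if_neg hi.2, zero_smul])]
          funext i
          have hci := congrFun hc i
          simp only [Pi.smul_apply, smul_eq_mul] at hci
          simp only [Pi.add_apply, Pi.smul_apply, Pi.zero_apply, smul_eq_mul,
            if_neg hjk, if_neg (Ne.symm hjk), if_pos rfl, if_true]
          rw [hci]; ring
        have := hli' hsum j
        simp only [if_pos rfl] at this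
        exact one_ne_zero this
      subst hjk
      rfl
  rw [Finset.card_product, Finset.card_univ, Fintype.card_fin, hTcard] at key
  rw [Nat.le_div_iff_mul_le (by omega), mul_comm]
  exact key
end

section
/- For every r ≥ 1 and every even m ≥ 2, there exist 2^{(m−2)r} pairwise nonintersecting 2-dimensional subspaces of ℂ^m, each generated by two vectors all of whose entries are 2^r-th roots of unity. -/
open Complex

lemma gcd_odd_pow2 (x r : ℕ) (hx : x % 2 = 1) : Nat.gcd x (2^r) = 1 := by
  have h2 : ¬ (2 ∣ x) := by omega
  exact (Nat.coprime_comm.mp ((Nat.prime_two.coprime_iff_not_dvd).mpr h2)).pow_right _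

lemma prodAbs : ∀ r : ℕ, 0 < r → ∀ μ : ℂ, IsPrimitiveRoot μ (2^r) → ∀ n : ℕ, ¬(2^r ∣ n) →
    ∏ j ∈ (Finset.range (2^r)).filter (fun j => j % 2 = 1), ‖μ^(j*n) - 1‖
      = 2^(Nat.gcd n (2^r)) := by
  intro r
  induction r with
  | zero => omega
  | succ r ih =>
    intro _ μ hμ n hn
    rcases Nat.eq_zero_or_pos r with rfl | hr
    · -- base : r+1 = 1
      have hset : (Finset.range (2^(0+1))).filter (fun j => j % 2 = 1) = {1} := by decide
      rw [hset, Finset.prod_singleton]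
      have hno : n % 2 = 1 := by
        rw [pow_one] at hn; omega
      have hsq : μ^2 = 1 := by
        have := hμ.pow_eq_one
        rwa [show (2:ℕ)^(0+1) = 2 by norm_num] at this
      have hne : μ ≠ 1 := hμ.ne_one (by norm_num)
      have : (μ - 1) * (μ + 1) = 0 := by linear_combination hsq
      rcases mul_eq_zero.mp this with h | h
      · exact absurd (by linear_combination h) hne
      · have hμval : μ = -1 := by linear_combination h
        rw [gcd_odd_pow2 n _ hno, hμval, one_mul]
        rw [(Nat.odd_iff.mpr hno).neg_one_pow]
        norm_num
    -- step
    set N := 2^r with hN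
    have hNpos : 0 < N := by positivity
    have h2N : 2^(r+1) = 2 * N := by rw [hN]; ring
    have hsplit : (Finset.range (2^(r+1))).filter (fun j => j % 2 = 1)
        = ((Finset.range N).filter (fun j => j % 2 = 1))
          ∪ ((Finset.range N).filter (fun j => j % 2 = 1)).image (· + N) := by
      ext j
      simp only [Finset.mem_union, Finset.mem_image, Finset.mem_filter, Finset.mem_range, h2N]
      constructor
      · rintro ⟨hj1, hj2⟩
        rcases lt_or_ge j N with h | h
        · exact Or.inl ⟨h, hj2⟩
        · exact Or.inr ⟨j - N, ⟨by omega, by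
            have hNe : N % 2 = 0 := by
              have : (2:ℕ) ∣ N := dvd_pow_self 2 (by omega)
              omega
            omega⟩, by omega⟩
      · rintro (⟨h1, h2⟩ | ⟨i, ⟨h1, h2⟩, rfl⟩)
        · exact ⟨by omega, h2⟩
        · have hNe : N % 2 = 0 := by
            have : (2:ℕ) ∣ N := dvd_pow_self 2 (by omega)
            omega
          exact ⟨by omega, by omega⟩
    have hdisj : Disjoint ((Finset.range N).filter (fun j => j % 2 = 1))
        (((Finset.range N).filter (fun j => j % 2 = 1)).image (· + N)) := by
      rw [Finset.disjoint_left]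
      intro x hx hx2
      simp only [Finset.mem_image, Finset.mem_filter, Finset.mem_range] at hx hx2
      omega
    rw [hsplit, Finset.prod_union hdisj,
      Finset.prod_image (by intro x _ y _ h; simp only at h; omega)]
    rw [← Finset.prod_mul_distrib]
    have hμ2 : IsPrimitiveRoot (μ^2) N := hμ.pow (by positivity) (by rw [h2N])
    have hσ : μ^N = -1 := by
      have h1 : (μ^N)^2 = 1 := by
        rw [← pow_mul]
        have h2 := hμ.pow_eq_one
        rw [h2N] at h2
        rw [show N * 2 = 2 * N by ring]; exact h2
      have h2 : μ^N ≠ 1 := hμ.pow_ne_one_of_pos_of_lt hNpos.ne' (by omega)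
      have h3 : (μ^N - 1) * (μ^N + 1) = 0 := by linear_combination h1
      rcases mul_eq_zero.mp h3 with h | h
      · exact absurd (by linear_combination h) h2
      · linear_combination h
    rcases Nat.even_or_odd n with hne | hno
    · obtain ⟨n', rfl⟩ := hne
      have hn' : ¬ N ∣ n' := by
        intro hc
        exact hn (by rw [h2N, show n'+n' = 2*n' by ring]; exact mul_dvd_mul_left 2 hc)
      have heq : ∀ j ∈ (Finset.range N).filter (fun j => j % 2 = 1),
          ‖μ^(j*(n'+n')) - 1‖ * ‖μ^((j+N)*(n'+n')) - 1‖
          = ‖(μ^2)^(j*n') - 1‖ * ‖(μ^2)^(j*n') - 1‖ := by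
        intro j _
        have e1 : μ^(j*(n'+n')) = (μ^2)^(j*n') := by
          rw [← pow_mul]; congr 1; ring
        have eN : μ^(N*(2*n')) = 1 := by
          rw [pow_mul, hσ, Even.neg_one_pow ⟨n', by ring⟩]
        have e2 : μ^((j+N)*(n'+n')) = (μ^2)^(j*n') := by
          rw [show (j+N)*(n'+n') = j*(n'+n') + N*(2*n') by ring, pow_add, e1, eN, mul_one]
        rw [e1, e2]
      rw [Finset.prod_congr rfl heq, Finset.prod_mul_distrib, ih hr (μ^2) hμ2 n' hn',
        show Nat.gcd (n'+n') (2^(r+1)) = 2 * Nat.gcd n' N by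
          rw [h2N, show n'+n' = 2*n' by ring, Nat.gcd_mul_left],
        mul_comm 2 (Nat.gcd n' N), pow_mul]
      ring
    · rw [Nat.odd_iff] at hno
      have hn' : ¬ N ∣ n := by
        intro hc
        have h2 : (2:ℕ) ∣ N := dvd_pow_self 2 (by omega)
        have := dvd_trans h2 hc
        omega
      have heq : ∀ j ∈ (Finset.range N).filter (fun j => j % 2 = 1),
          ‖μ^(j*n) - 1‖ * ‖μ^((j+N)*n) - 1‖
          = ‖(μ^2)^(j*n) - 1‖ := by
        intro j _
        have eN : μ^(N*n) = -1 := by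
          rw [pow_mul, hσ, (Nat.odd_iff.mpr hno).neg_one_pow]
        have e2 : μ^((j+N)*n) = -(μ^(j*n)) := by
          rw [show (j+N)*n = j*n + N*n by ring, pow_add, eN]
          ring
        rw [e2, ← norm_mul]
        have e3 : (μ^(j*n) - 1) * (-(μ^(j*n)) - 1) = -((μ^2)^(j*n) - 1) := by
          rw [← pow_mul, show 2*(j*n) = j*n*2 by ring, pow_mul]; ring
        rw [e3, norm_neg]
      rw [Finset.prod_congr rfl heq, ih hr (μ^2) hμ2 n hn',
        gcd_odd_pow2 n _ hno, gcd_odd_pow2 n _ hno]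

lemma claimC : ∀ r : ℕ, 0 < r → ∀ k l : ℕ, ¬(2^r ∣ k) → ¬(2^r ∣ l) → ¬(2^r ∣ (k+l)) →
    ¬(2^r ∣ (k+2*l)) →
    Nat.gcd k (2^r) + Nat.gcd (k+2*l) (2^r) ≠ Nat.gcd (k+l) (2^r) + Nat.gcd l (2^r) := by
  intro r
  induction r with
  | zero => omega
  | succ r ih =>
    intro _ k l hk hl hkl hk2l
    rcases Nat.eq_zero_or_pos r with rfl | hr
    · exfalso
      apply hkl
      have e : (2:ℕ)^(0+1) = 2 := by norm_num
      rw [e] at hk hl ⊢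
      omega
    have h2N : (2:ℕ)^(r+1) = 2 * 2^r := by ring
    have hodd : ∀ x : ℕ, x % 2 = 1 → Nat.gcd x (2^(r+1)) = 1 := by
      intro x hx
      have h2 : ¬ (2 ∣ x) := by omega
      have : Nat.Coprime x 2 := Nat.coprime_comm.mp ((Nat.prime_two.coprime_iff_not_dvd).mpr h2)
      exact this.pow_right _
    have heven : ∀ x : ℕ, x % 2 = 0 → 2 ∣ Nat.gcd x (2^(r+1)) := by
      intro x hx
      exact Nat.dvd_gcd (Nat.dvd_of_mod_eq_zero hx) (dvd_pow_self 2 (by omega))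
    have hpos : ∀ x : ℕ, 0 < Nat.gcd x (2^(r+1)) :=
      fun x => Nat.gcd_pos_of_pos_right _ (by positivity)
    rcases Nat.even_or_odd k with hke | hko
    · rcases Nat.even_or_odd l with hle | hlo
      · obtain ⟨k', rfl⟩ := hke
        obtain ⟨l', rfl⟩ := hle
        have g1 : Nat.gcd (k'+k') (2^(r+1)) = 2 * Nat.gcd k' (2^r) := by
          rw [show k'+k' = 2*k' from (two_mul k').symm, h2N, Nat.gcd_mul_left]
        have g2 : Nat.gcd (k'+k' + 2*(l'+l')) (2^(r+1)) = 2 * Nat.gcd (k'+2*l') (2^r) := by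
          rw [show k'+k' + 2*(l'+l') = 2*(k'+2*l') by ring, h2N, Nat.gcd_mul_left]
        have g3 : Nat.gcd (k'+k' + (l'+l')) (2^(r+1)) = 2 * Nat.gcd (k'+l') (2^r) := by
          rw [show k'+k' + (l'+l') = 2*(k'+l') by ring, h2N, Nat.gcd_mul_left]
        have g4 : Nat.gcd (l'+l') (2^(r+1)) = 2 * Nat.gcd l' (2^r) := by
          rw [show l'+l' = 2*l' from (two_mul l').symm, h2N, Nat.gcd_mul_left]
        rw [g1, g2, g3, g4]
        have hd : ∀ x : ℕ, ¬ 2^(r+1) ∣ (x + x) → ¬ 2^r ∣ x := by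
          intro x hx hc
          exact hx (by rw [show x + x = 2*x from (two_mul x).symm, h2N]
                       exact mul_dvd_mul_left 2 hc)
        have := ih hr k' l' (hd _ hk) (hd _ hl)
          (hd _ (by rwa [show k'+k'+(l'+l') = (k'+l') + (k'+l') by ring] at hkl))
          (hd _ (by rwa [show k'+k'+2*(l'+l') = (k'+2*l') + (k'+2*l') by ring] at hk2l))
        omega
      · rw [Nat.even_iff] at hke; rw [Nat.odd_iff] at hlo
        have c1 := heven k hke
        have c2 := heven (k + 2*l) (by omega)
        have c3 := hodd (k + l) (by omega)
        have c4 := hodd l hlo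
        have p1 := hpos k
        have p2 := hpos (k + 2*l)
        omega
    · rw [Nat.odd_iff] at hko
      have c1 := hodd k hko
      have c2 := hodd (k + 2*l) (by omega)
      rcases Nat.even_or_odd l with hle | hlo
      · rw [Nat.even_iff] at hle
        have c3 := hodd (k+l) (by omega)
        have c4 := heven l hle
        have p4 := hpos l
        omega
      · rw [Nat.odd_iff] at hlo
        have c3 := heven (k+l) (by omega)
        have c4 := hodd l hlo
        have p3 := hpos (k+l)
        omega

open Complex Polynomial

lemma Lprime (r : ℕ) (hr : 0 < r) (μ : ℂ) (hμ : IsPrimitiveRoot μ (2^r)) (k l c : ℕ)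
    (h : ¬(2^r ∣ k) ∨ ¬(2^r ∣ l)) :
    μ^c * ((μ^k - 1) * (μ^(k+2*l) - 1)) ≠ (μ^(k+l) - 1) * (μ^l - 1) := by
  have hNpos : 0 < 2^r := by positivity
  have hone : ∀ x : ℕ, 2^r ∣ x → μ^x - 1 = 0 := by
    intro x hx
    rw [(hμ.pow_eq_one_iff_dvd x).mpr hx, sub_self]
  have hnone : ∀ x : ℕ, ¬ 2^r ∣ x → μ^x - 1 ≠ 0 := by
    intro x hx hc
    exact hx ((hμ.pow_eq_one_iff_dvd x).mp (by linear_combination hc))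
  have hμne : μ ≠ 0 := by
    intro hc
    have h1 := hμ.pow_eq_one
    rw [hc, zero_pow (by positivity)] at h1
    exact zero_ne_one h1
  intro heq
  by_cases hk : 2^r ∣ k
  · have hl : ¬ 2^r ∣ l := by tauto
    have hkl : ¬ 2^r ∣ k + l := by
      intro hc
      have := Nat.dvd_sub hc hk
      simp only [Nat.add_sub_cancel_left] at this
      exact hl this
    rw [hone k hk] at heq
    simp only [mul_zero, zero_mul] at heq
    exact mul_ne_zero (hnone _ hkl) (hnone _ hl) heq.symm
  by_cases hk2 : 2^r ∣ k + 2*l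
  · have hl : ¬ 2^r ∣ l := by
      intro hc
      apply hk
      have h2 : 2^r ∣ 2*l := Dvd.dvd.mul_left hc 2
      have := Nat.dvd_sub hk2 h2
      simpa using this
    have hkl : ¬ 2^r ∣ k + l := by
      intro hc
      apply hl
      have := Nat.dvd_sub hk2 hc
      simpa [show k + 2*l - (k+l) = l by omega] using this
    rw [hone _ hk2] at heq
    simp only [mul_zero] at heq
    exact mul_ne_zero (hnone _ hkl) (hnone _ hl) heq.symm
  have hLne : μ^c * ((μ^k - 1) * (μ^(k+2*l) - 1)) ≠ 0 :=
    mul_ne_zero (pow_ne_zero _ hμne) (mul_ne_zero (hnone _ hk) (hnone _ hk2))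
  by_cases hl : 2^r ∣ l
  · rw [hone _ hl] at heq
    simp only [mul_zero] at heq
    exact hLne heq
  by_cases hkl : 2^r ∣ k + l
  · rw [hone _ hkl] at heq
    simp only [zero_mul] at heq
    exact hLne heq
  -- main case : pass to conjugates
  have hint : IsIntegral ℚ μ := (hμ.isIntegral hNpos).tower_top
  set g : ℚ[X] := X^c * ((X^k - 1) * (X^(k+2*l) - 1)) - (X^(k+l) - 1) * (X^l - 1) with hg
  have hgroot : Polynomial.aeval μ g = 0 := by
    simp only [hg, map_sub, map_mul, map_pow, map_one, aeval_X]
    linear_combination heq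
  have hdvd : minpoly ℚ μ ∣ g := minpoly.dvd ℚ μ hgroot
  have hmin : Polynomial.cyclotomic (2^r) ℚ = minpoly ℚ μ :=
    Polynomial.cyclotomic_eq_minpoly_rat hμ hNpos
  have hconj : ∀ j ∈ (Finset.range (2^r)).filter (fun j => j % 2 = 1),
      (μ^j)^c * (((μ^j)^k - 1) * ((μ^j)^(k+2*l) - 1)) = ((μ^j)^(k+l) - 1) * ((μ^j)^l - 1) := by
    intro j hj
    simp only [Finset.mem_filter, Finset.mem_range] at hj
    have hcop : Nat.Coprime j (2^r) := by
      have h2 : ¬ (2 ∣ j) := by omega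
      exact (Nat.coprime_comm.mp ((Nat.prime_two.coprime_iff_not_dvd).mpr h2)).pow_right _
    have hprim : IsPrimitiveRoot (μ^j) (2^r) := hμ.pow_of_coprime j hcop
    have hroot : Polynomial.aeval (μ^j) (Polynomial.cyclotomic (2^r) ℚ) = 0 := by
      have := hprim.isRoot_cyclotomic hNpos
      rw [Polynomial.IsRoot.def] at this
      rw [Polynomial.aeval_def, ← Polynomial.eval_map, Polynomial.map_cyclotomic]
      exact this
    obtain ⟨q, hq⟩ := hdvd
    have : Polynomial.aeval (μ^j) g = 0 := by
      rw [hq, map_mul, ← hmin, hroot, zero_mul]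
    simp only [hg, map_sub, map_mul, map_pow, map_one, aeval_X] at this
    linear_combination this
  -- take abs and product
  have habs : ∀ j ∈ (Finset.range (2^r)).filter (fun j => j % 2 = 1),
      ‖μ^(j*k) - 1‖ * ‖μ^(j*(k+2*l)) - 1‖
      = ‖μ^(j*(k+l)) - 1‖ * ‖μ^(j*l) - 1‖ := by
    intro j hj
    have hc := hconj j hj
    have habsμ : ‖μ‖ = 1 := hμ.norm'_eq_one (by positivity)
    simp only [← pow_mul] at hc
    have h2 := congrArg norm hc
    rwa [norm_mul, norm_mul, norm_mul, norm_pow, habsμ, one_pow, one_mul] at h2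
  have hprodeq := Finset.prod_congr rfl habs
  rw [Finset.prod_mul_distrib, Finset.prod_mul_distrib] at hprodeq
  rw [prodAbs r hr μ hμ k hk, prodAbs r hr μ hμ (k+2*l) hk2, prodAbs r hr μ hμ (k+l) hkl,
    prodAbs r hr μ hμ l hl, ← pow_add, ← pow_add] at hprodeq
  have : Nat.gcd k (2^r) + Nat.gcd (k+2*l) (2^r) = Nat.gcd (k+l) (2^r) + Nat.gcd l (2^r) := by
    exact Nat.pow_right_injective (le_refl 2) (by exact_mod_cast hprodeq)
  exact claimC r hr k l hk hl hkl hk2 this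

lemma detNe (r : ℕ) (hr : 0 < r) (μ : ℂ) (hμ : IsPrimitiveRoot μ (2^r)) (a b a' b' : ℕ)
    (ha : a < 2^r) (hb : b < 2^r) (ha' : a' < 2^r) (hb' : b' < 2^r)
    (hne : ¬(a = a' ∧ b = b')) :
    (μ^a - μ^a') * (μ^(a+2*b+1) - μ^(a'+2*b'+1)) - (μ^(a+b) - μ^(a'+b')) * (μ^b - μ^b') ≠ 0 := by
  set N := 2^r with hN
  have hNpos : 0 < N := by positivity
  have hμN : μ^N = 1 := hμ.pow_eq_one
  have hμne : μ ≠ 0 := by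
    intro hc
    rw [hc, zero_pow (by omega)] at hμN
    exact zero_ne_one hμN
  set k := a + (N - a') with hk
  set l := b + (N - b') with hl
  have hdvdiff : ∀ x y : ℕ, x < N → y < N → (N ∣ x + (N - y)) → x = y := by
    rintro x y hx hy ⟨t, ht⟩
    match t with
    | 0 => omega
    | 1 => omega
    | (t+2) =>
      have : N * (t+2) = N*t + 2*N := by ring
      omega
  have hper : ∀ x t : ℕ, μ^(x + t*N) = μ^x := by
    intro x t
    rw [pow_add, mul_comm t N, pow_mul, hμN, one_pow, mul_one]
  have e1 : μ^a - μ^a' = μ^a' * (μ^k - 1) := by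
    rw [mul_sub, mul_one, ← pow_add, show a' + k = a + 1*N by omega, hper]
  have e2 : μ^(a+2*b+1) - μ^(a'+2*b'+1) = μ^(a'+2*b'+1) * (μ^(k+2*l) - 1) := by
    rw [mul_sub, mul_one, ← pow_add, show (a'+2*b'+1) + (k+2*l) = (a+2*b+1) + 3*N by omega, hper]
  have e3 : μ^(a+b) - μ^(a'+b') = μ^(a'+b') * (μ^(k+l) - 1) := by
    rw [mul_sub, mul_one, ← pow_add, show (a'+b') + (k+l) = (a+b) + 2*N by omega, hper]
  have e4 : μ^b - μ^b' = μ^b' * (μ^l - 1) := by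
    rw [mul_sub, mul_one, ← pow_add, show b' + l = b + 1*N by omega, hper]
  rw [e1, e2, e3, e4]
  have hd : μ^a' * (μ^k - 1) * (μ^(a'+2*b'+1) * (μ^(k+2*l) - 1))
      - μ^(a'+b') * (μ^(k+l) - 1) * (μ^b' * (μ^l - 1))
      = μ^(a'+2*b') * (μ^(a'+1) * ((μ^k - 1) * (μ^(k+2*l) - 1))
          - (μ^(k+l) - 1) * (μ^l - 1)) := by
    simp only [pow_add, pow_mul, pow_one]
    ring
  rw [hd]
  have hyp : ¬(N ∣ k) ∨ ¬(N ∣ l) := by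
    by_contra hc
    push_neg at hc
    exact hne ⟨hdvdiff a a' ha ha' hc.1, hdvdiff b b' hb hb' hc.2⟩
  exact mul_ne_zero (pow_ne_zero _ hμne)
    (sub_ne_zero_of_ne (Lprime r hr μ hμ k l (a'+1) hyp))

/-- For every `r ≥ 1` and even `m ≥ 2` there exist `2^((m-2)r)` pairwise
nonintersecting planes in `ℂ^m`, each spanned by two vectors all of whose entries
are `2^r`-th roots of unity. -/
theorem stmt_10 (r m : ℕ) (hr : 1 ≤ r) (hm : 2 ≤ m) (hme : Even m) :
    ∃ S : Finset (Submodule ℂ (Fin m → ℂ)),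
      S.card = 2 ^ ((m - 2) * r) ∧
      (∀ W ∈ S, ∃ v1 v2 : Fin m → ℂ,
        (∀ i, (v1 i) ^ (2 ^ r) = 1) ∧ (∀ i, (v2 i) ^ (2 ^ r) = 1) ∧
        W = Submodule.span ℂ {v1, v2} ∧ Module.finrank ℂ W = 2) ∧
      (∀ W ∈ S, ∀ W' ∈ S, W ≠ W' → W ⊓ W' = ⊥) := by
  obtain ⟨K, hK⟩ : ∃ K, m = 2 + 2*K := by
    obtain ⟨p, hp⟩ := hme
    exact ⟨p - 1, by omega⟩
  have hrpos : 0 < r := hr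
  set N := 2^r with hN
  have hNpos : 0 < N := pow_pos (by norm_num) r
  set μ : ℂ := Complex.exp (2*Real.pi*Complex.I / N) with hμdef
  have hμ : IsPrimitiveRoot μ N := Complex.isPrimitiveRoot_exp N (by omega)
  have hμN : μ^N = 1 := hμ.pow_eq_one
  have hNeven : ∃ N', N = 2 * N' := ⟨2^(r-1), by rw [hN]; conv_lhs => rw [show r = (r-1)+1 by omega, pow_succ']⟩
  have hcard : Fintype.card (Fin m) = Fintype.card (Fin 2 ⊕ Fin K × Fin 2) := by
    simp; omega
  set e : Fin m ≃ (Fin 2 ⊕ Fin K × Fin 2) := Fintype.equivOfCardEq hcard with he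
  set V1 : (Fin K → Fin N × Fin N) → (Fin 2 ⊕ Fin K × Fin 2) → ℂ :=
    fun c => Sum.elim (fun _ => (1:ℂ))
      (fun p => if p.2 = 0 then μ^(((c p.1).1 : ℕ)) else μ^(((c p.1).2 : ℕ))) with hV1
  set V2 : (Fin K → Fin N × Fin N) → (Fin 2 ⊕ Fin K × Fin 2) → ℂ :=
    fun c => Sum.elim (fun i => if i = 0 then (1:ℂ) else -1)
      (fun p => if p.2 = 0 then μ^(((c p.1).1 : ℕ) + ((c p.1).2 : ℕ))
                else μ^(((c p.1).1 : ℕ) + 2*((c p.1).2 : ℕ) + 1)) with hV2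
  set v1 : (Fin K → Fin N × Fin N) → (Fin m → ℂ) := fun c i => V1 c (e i) with hv1
  set v2 : (Fin K → Fin N × Fin N) → (Fin m → ℂ) := fun c i => V2 c (e i) with hv2
  set plane : (Fin K → Fin N × Fin N) → Submodule ℂ (Fin m → ℂ) :=
    fun c => Submodule.span ℂ {v1 c, v2 c} with hplane
  -- evaluation
  have ev1 : ∀ c y, v1 c (e.symm y) = V1 c y := by
    intro c y; rw [hv1]; simp
  have ev2 : ∀ c y, v2 c (e.symm y) = V2 c y := by
    intro c y; rw [hv2]; simp
  -- zero intersection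
  have hzero : ∀ c c' (x : Fin m → ℂ), c ≠ c' → x ∈ plane c → x ∈ plane c' → x = 0 := by
    intro c c' x hcc h1 h2
    rw [hplane, Submodule.mem_span_pair] at h1 h2
    obtain ⟨s, t, hst⟩ := h1
    obtain ⟨s', t', hst'⟩ := h2
    have hx : s • v1 c + t • v2 c = s' • v1 c' + t' • v2 c' := hst.trans hst'.symm
    have Q : ∀ y, s * V1 c y + t * V2 c y = s' * V1 c' y + t' * V2 c' y := by
      intro y
      have := congrFun hx (e.symm y)
      simpa [Pi.add_apply, Pi.smul_apply, smul_eq_mul, ev1, ev2] using this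
    have Q0 := Q (Sum.inl 0)
    have Q1 := Q (Sum.inl 1)
    simp [hV1, hV2] at Q0 Q1
    have hs : s = s' := by linear_combination (Q0 + Q1) / 2
    have ht : t = t' := by linear_combination (Q0 - Q1) / 2
    obtain ⟨t0, ht0⟩ : ∃ t0, c t0 ≠ c' t0 := Function.ne_iff.mp hcc
    set a := ((c t0).1 : ℕ) with hadef
    set b := ((c t0).2 : ℕ) with hbdef
    set a2 := ((c' t0).1 : ℕ) with ha2def
    set b2 := ((c' t0).2 : ℕ) with hb2def
    have QA := Q (Sum.inr (t0, 0))
    have QB := Q (Sum.inr (t0, 1))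
    simp [hV1, hV2] at QA QB
    rw [← hs, ← ht] at QA QB
    set A := μ^a - μ^a2 with hA
    set B := μ^(a+b) - μ^(a2+b2) with hB
    set C := μ^b - μ^b2 with hC
    set D := μ^(a+2*b+1) - μ^(a2+2*b2+1) with hD
    have hdet : A * D - B * C ≠ 0 := by
      apply detNe r hrpos μ hμ a b a2 b2 (Fin.is_lt _) (Fin.is_lt _) (Fin.is_lt _) (Fin.is_lt _)
      rintro ⟨hh1, hh2⟩
      exact ht0 (Prod.ext (Fin.val_injective hh1) (Fin.val_injective hh2))
    have hsA : s * A + t * B = 0 := by rw [hA, hB]; linear_combination QA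
    have hsC : s * C + t * D = 0 := by rw [hC, hD]; linear_combination QB
    have hs0 : s = 0 := by
      have h5 : s * (A*D - B*C) = D*(s*A + t*B) - B*(s*C + t*D) := by ring
      rw [hsA, hsC] at h5
      simp only [mul_zero, sub_zero] at h5
      rcases mul_eq_zero.mp h5 with h | h
      · exact h
      · exact absurd h hdet
    have ht0' : t = 0 := by
      have h5 : t * (A*D - B*C) = A*(s*C + t*D) - C*(s*A + t*B) := by ring
      rw [hsA, hsC] at h5
      simp only [mul_zero, sub_zero] at h5
      rcases mul_eq_zero.mp h5 with h | h
      · exact h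
      · exact absurd h hdet
    rw [← hst, hs0, ht0']
    simp
  have hbot : ∀ c c', c ≠ c' → plane c ⊓ plane c' = ⊥ := by
    intro c c' hcc
    rw [eq_bot_iff]
    intro x hx
    rw [Submodule.mem_inf] at hx
    rw [Submodule.mem_bot]
    exact hzero c c' x hcc hx.1 hx.2
  -- entries
  have hent1 : ∀ c i, (v1 c i)^(2^r) = 1 := by
    intro c i
    simp only [hv1]
    rcases hei : e i with j | p
    · simp [hV1]
    · rw [hV1]
      simp only [Sum.elim_inr]
      split <;>
      · rw [← pow_mul, mul_comm, pow_mul, ← hN, hμN, one_pow]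
  have hent2 : ∀ c i, (v2 c i)^(2^r) = 1 := by
    intro c i
    simp only [hv2]
    rcases hei : e i with j | p
    · rw [hV2]
      simp only [Sum.elim_inl]
      split
      · exact one_pow _
      · obtain ⟨N', hN'⟩ := hNeven
        rw [← hN, hN', pow_mul]
        norm_num
    · rw [hV2]
      simp only [Sum.elim_inr]
      split <;>
      · rw [← pow_mul, mul_comm, pow_mul, ← hN, hμN, one_pow]
  -- linear independence and rank
  have hind : ∀ c, LinearIndependent ℂ ![v1 c, v2 c] := by
    intro c
    rw [LinearIndependent.pair_iff]
    intro s t hst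
    have Q : ∀ y, s * V1 c y + t * V2 c y = 0 := by
      intro y
      have := congrFun hst (e.symm y)
      simpa [Pi.add_apply, Pi.smul_apply, smul_eq_mul, ev1, ev2] using this
    have Q0 := Q (Sum.inl 0)
    have Q1 := Q (Sum.inl 1)
    simp [hV1, hV2] at Q0 Q1
    constructor
    · linear_combination (Q0 + Q1) / 2
    · linear_combination (Q0 - Q1) / 2
  have hrank : ∀ c, Module.finrank ℂ (plane c) = 2 := by
    intro c
    have hrange : Set.range ![v1 c, v2 c] = {v1 c, v2 c} := by
      simp [Matrix.range_cons, Matrix.range_empty]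
      exact Set.pair_comm _ _
    have := finrank_span_eq_card (hind c)
    rw [hrange] at this
    rw [hplane]
    simpa using this
  -- injectivity of plane
  have hpne : ∀ c, plane c ≠ ⊥ := by
    intro c hbot'
    have hmem : v1 c ∈ plane c := by
      rw [hplane]
      exact Submodule.subset_span (Set.mem_insert _ _)
    rw [hbot', Submodule.mem_bot] at hmem
    have := congrFun hmem (e.symm (Sum.inl 0))
    rw [ev1] at this
    simp [hV1] at this
  have hinj : Function.Injective plane := by
    intro c c' hpl
    by_contra hcc
    have h1 : plane c ⊓ plane c' = ⊥ := hbot c c' hcc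
    rw [hpl, inf_idem] at h1
    exact hpne c' h1
  classical
  refine ⟨Finset.image plane Finset.univ, ?_, ?_, ?_⟩
  · rw [Finset.card_image_of_injective _ hinj, Finset.card_univ]
    rw [Fintype.card_fun]
    simp only [Fintype.card_prod, Fintype.card_fin]
    rw [hN, ← pow_add, ← pow_mul]
    congr 1
    rw [show m - 2 = 2*K by omega]
    ring
  · intro W hW
    rw [Finset.mem_image] at hW
    obtain ⟨c, _, rfl⟩ := hW
    exact ⟨v1 c, v2 c, hent1 c, hent2 c, rfl, hrank c⟩
  · intro W hW W' hW' hne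
    rw [Finset.mem_image] at hW hW'
    obtain ⟨c, _, rfl⟩ := hW
    obtain ⟨c', _, rfl⟩ := hW'
    exact hbot c c' (fun h => hne (congrArg plane h))
end

section
/- Let μ be a primitive 2^r-th complex root of unity, r ≥ 1, and let a, b, c, d ∈ Z. Then the determinant of the 2×2 matrix with rows (μ^c − μ^a, μ^d − μ^b) and (μ^{c+d} − μ^{a+b}, μ^{c+2d+1} − μ^{a+2b+1}) equals zero if and only if μ^a = μ^c and μ^b = μ^d. -/
open Polynomial

namespace Stmt12

noncomputable abbrev A (μ : ℂ) := ℤ[X] ⧸ Ideal.span {minpoly ℤ μ}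

noncomputable def xA (μ : ℂ) : A μ := Ideal.Quotient.mk _ X

noncomputable def eps (μ : ℂ) : A μ →+* ℂ :=
  Ideal.Quotient.lift _ ((aeval μ).toRingHom) (by
    intro p hp
    rw [Ideal.mem_span_singleton] at hp
    obtain ⟨q, rfl⟩ := hp
    simp [minpoly.aeval])

lemma eps_mk (μ : ℂ) (p : ℤ[X]) : eps μ (Ideal.Quotient.mk _ p) = aeval μ p := rfl

lemma eps_x (μ : ℂ) : eps μ (xA μ) = μ := by
  rw [xA, eps_mk, aeval_X]

variable {r : ℕ} {μ : ℂ}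

lemma eps_inj (hr : 1 ≤ r) (hμ : IsPrimitiveRoot μ (2 ^ r)) :
    Function.Injective (eps μ) := by
  rw [injective_iff_map_eq_zero]
  intro z hz
  obtain ⟨p, rfl⟩ := Ideal.Quotient.mk_surjective z
  rw [eps_mk] at hz
  have hint : IsIntegral ℤ μ := hμ.isIntegral (by positivity)
  have : minpoly ℤ μ ∣ p := minpoly.isIntegrallyClosed_dvd hint hz
  rw [Ideal.Quotient.eq_zero_iff_mem, Ideal.mem_span_singleton]
  exact this

noncomputable def phi (hr : 1 ≤ r) (hμ : IsPrimitiveRoot μ (2 ^ r)) : A μ →+* ZMod 2 :=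
  Ideal.Quotient.lift _ ((Int.castRingHom (ZMod 2)).comp (evalRingHom 1)) (by
    intro p hp
    rw [Ideal.mem_span_singleton] at hp
    obtain ⟨q, rfl⟩ := hp
    have hmin : minpoly ℤ μ = cyclotomic (2 ^ r) ℤ :=
      (Polynomial.cyclotomic_eq_minpoly hμ (by positivity)).symm
    have h2 : (minpoly ℤ μ).eval 1 = 2 := by
      rw [hmin]
      obtain ⟨r', rfl⟩ : ∃ r', r = r' + 1 := ⟨r - 1, by omega⟩
      exact_mod_cast Polynomial.eval_one_cyclotomic_prime_pow r'
    simp only [RingHom.comp_apply, coe_evalRingHom, eval_mul, h2, Int.cast_mul]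
    norm_num
    left
    decide)

lemma phi_mk (hr : 1 ≤ r) (hμ : IsPrimitiveRoot μ (2 ^ r)) (p : ℤ[X]) :
    phi hr hμ (Ideal.Quotient.mk _ p) = ((p.eval 1 : ℤ) : ZMod 2) := rfl

lemma phi_x (hr : 1 ≤ r) (hμ : IsPrimitiveRoot μ (2 ^ r)) : phi hr hμ (xA μ) = 1 := by
  rw [xA, phi_mk]
  simp

lemma phi_unit (hr : 1 ≤ r) (hμ : IsPrimitiveRoot μ (2 ^ r)) (u : (A μ)ˣ) :
    phi hr hμ u.val = 1 := by
  have h : phi hr hμ u.val * phi hr hμ (↑u⁻¹) = 1 := by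
    rw [← map_mul, u.mul_inv, map_one]
  have key : ∀ z w : ZMod 2, z * w = 1 → z = 1 := by decide
  exact key _ _ h

lemma mu_pow_m (hr : 1 ≤ r) (hμ : IsPrimitiveRoot μ (2 ^ r)) : μ ^ (2 ^ (r - 1)) = -1 := by
  have h1 : (μ ^ (2 ^ (r - 1)) - 1) * (μ ^ (2 ^ (r - 1)) + 1) = 0 := by
    have h2 : μ ^ (2 ^ (r - 1)) * μ ^ (2 ^ (r - 1)) = 1 := by
      rw [← pow_add]
      have : 2 ^ (r - 1) + 2 ^ (r - 1) = 2 ^ r := by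
        have hh : 2 ^ (r - 1) * 2 = 2 ^ r := by rw [← pow_succ]; congr 1; omega
        omega
      rw [this, hμ.pow_eq_one]
    linear_combination h2
  rcases mul_eq_zero.mp h1 with h | h
  · exfalso
    have hne := hμ.pow_ne_one_of_pos_of_lt (l := 2 ^ (r - 1)) (by positivity)
      (Nat.pow_lt_pow_right one_lt_two (by omega))
    exact hne (by linear_combination h)
  · linear_combination h

lemma x_pow_m (hr : 1 ≤ r) (hμ : IsPrimitiveRoot μ (2 ^ r)) :
    (xA μ) ^ (2 ^ (r - 1)) = -1 := by
  have hint : IsIntegral ℤ μ := hμ.isIntegral (by positivity)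
  have hdvd : minpoly ℤ μ ∣ (X : ℤ[X]) ^ (2 ^ (r - 1)) + 1 :=
    minpoly.isIntegrallyClosed_dvd hint (by simp [mu_pow_m hr hμ])
  have h0 : Ideal.Quotient.mk (Ideal.span {minpoly ℤ μ}) ((X : ℤ[X]) ^ (2 ^ (r - 1)) + 1) = 0 := by
    rw [Ideal.Quotient.eq_zero_iff_mem, Ideal.mem_span_singleton]; exact hdvd
  rw [map_add, map_pow, map_one] at h0
  rw [xA]
  linear_combination h0




variable {r : ℕ} {μ : ℂ}

noncomputable def ux (hr : 1 ≤ r) (hμ : IsPrimitiveRoot μ (2 ^ r)) : (A μ)ˣ where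
  val := xA μ
  inv := -(xA μ) ^ (2 ^ (r - 1) - 1)
  val_inv := by
    have h := x_pow_m hr hμ
    have h2 : (xA μ) ^ (2 ^ (r - 1)) = xA μ * (xA μ) ^ (2 ^ (r - 1) - 1) := by
      rw [← pow_succ']
      congr 1
      have : 0 < 2 ^ (r - 1) := by positivity
      omega
    rw [h2] at h
    linear_combination -h
  inv_val := by
    have h := x_pow_m hr hμ
    have h2 : (xA μ) ^ (2 ^ (r - 1)) = xA μ * (xA μ) ^ (2 ^ (r - 1) - 1) := by
      rw [← pow_succ']
      congr 1
      have : 0 < 2 ^ (r - 1) := by positivity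
      omega
    rw [h2] at h
    linear_combination -h

noncomputable def UX (hr : 1 ≤ r) (hμ : IsPrimitiveRoot μ (2 ^ r)) (k : ℤ) : (A μ)ˣ :=
  ux hr hμ ^ k

lemma UX_val_eps (hr : 1 ≤ r) (hμ : IsPrimitiveRoot μ (2 ^ r)) (k : ℤ) :
    eps μ ((UX hr hμ k).val) = μ ^ k := by
  have h1 : eps μ ((UX hr hμ k).val)
      = ((Units.map (eps μ).toMonoidHom (ux hr hμ)) ^ k : ℂˣ) := by
    rw [← map_zpow]
    exact (Units.coe_map (eps μ).toMonoidHom (ux hr hμ ^ k)).symm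
  rw [h1, Units.val_zpow_eq_zpow_val]
  congr 1
  exact eps_x μ

lemma UX_m (hr : 1 ≤ r) (hμ : IsPrimitiveRoot μ (2 ^ r)) :
    ((UX hr hμ (2 ^ (r - 1) : ℕ)).val) = -1 := by
  rw [UX, zpow_natCast, Units.val_pow_eq_pow_val]
  exact x_pow_m hr hμ

lemma UX_n (hr : 1 ≤ r) (hμ : IsPrimitiveRoot μ (2 ^ r)) :
    UX hr hμ ((2 ^ r : ℕ) : ℤ) = 1 := by
  apply Units.ext
  rw [UX, zpow_natCast, Units.val_pow_eq_pow_val, Units.val_one]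
  have h : (2 : ℕ) ^ r = 2 ^ (r - 1) * 2 := by
    rw [← pow_succ]; congr 1; omega
  rw [h, pow_mul]
  show ((xA μ) ^ (2 ^ (r - 1))) ^ 2 = 1
  rw [x_pow_m hr hμ]
  ring

lemma UX_congr (hr : 1 ≤ r) (hμ : IsPrimitiveRoot μ (2 ^ r)) {k l : ℤ}
    (h : ((2 : ℤ) ^ r) ∣ (k - l)) : UX hr hμ k = UX hr hμ l := by
  obtain ⟨e, he⟩ := h
  have hk : k = l + ((2 ^ r : ℕ) : ℤ) * e := by push_cast; linarith
  rw [UX, hk, zpow_add, zpow_mul]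
  have h1 : ux hr hμ ^ ((2 ^ r : ℕ) : ℤ) = UX hr hμ ((2 ^ r : ℕ) : ℤ) := rfl
  rw [h1, UX_n hr hμ, one_zpow, mul_one]
  rfl




variable {r : ℕ} {μ : ℂ}

lemma one_sub_UX_odd (hr : 1 ≤ r) (hμ : IsPrimitiveRoot μ (2 ^ r)) {k : ℤ}
    (hk : ¬ ((2 : ℤ) ^ r) ∣ k) {t : ℤ} (ht : Odd t) :
    ∃ u : (A μ)ˣ, 1 - (UX hr hμ (t * k)).val = (1 - (UX hr hμ k).val) * u.val := by
  have hn1 : 1 < (2 : ℤ) ^ r := by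
    have : (2:ℤ)^1 ≤ 2^r := pow_le_pow_right₀ (by norm_num) hr
    omega
  set n : ℤ := 2 ^ r with hn
  have hq : n * (t / n) + t % n = t := Int.mul_ediv_add_emod t n
  have h0 : 0 ≤ t % n := Int.emod_nonneg t (by omega)
  set τ : ℕ := (t % n).toNat with hτdef
  have hτc : (τ : ℤ) = t % n := Int.toNat_of_nonneg h0
  have hτodd : Odd τ := by
    have h2n : (2:ℤ) ∣ n := ⟨2^(r-1), by rw [hn, ← pow_succ']; congr 1; omega⟩
    have hmm : (t % n) % 2 = t % 2 := Int.emod_emod_of_dvd t h2n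
    rw [Nat.odd_iff]
    rcases ht with ⟨w, hw⟩
    omega
  have hτpos : 0 < τ := by rcases hτodd with ⟨w, hw⟩; omega
  have hUX : UX hr hμ (t * k) = UX hr hμ ((τ : ℤ) * k) := by
    apply UX_congr hr hμ
    have h' : t - (τ:ℤ) = n * (t/n) := by omega
    rw [show t * k - (τ:ℤ) * k = (t - (τ:ℤ)) * k by ring, h']
    exact ⟨(t/n) * k, by rw [hn]; ring⟩
  set y : A μ := (UX hr hμ k).val with hy
  have hyτ : (UX hr hμ ((τ:ℤ) * k)).val = y ^ τ := by
    rw [hy, UX, UX, mul_comm ((τ:ℤ)) k, zpow_mul, zpow_natCast, Units.val_pow_eq_pow_val]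
  set S : A μ := ∑ i ∈ Finset.range τ, y ^ i with hSdef
  have hS : 1 - y ^ τ = (1 - y) * S := by linear_combination geom_sum_mul y τ
  have hcop : Nat.Coprime τ (2 ^ r) :=
    Nat.Coprime.pow_right _ (Nat.coprime_two_right.mpr hτodd)
  obtain ⟨σ, -, hσ⟩ := Nat.exists_mul_mod_eq_one_of_coprime hcop
    (by have : 2^1 ≤ 2^r := Nat.pow_le_pow_right (by norm_num) hr; omega)
  have hτσ : n ∣ ((τ * σ : ℕ) : ℤ) - 1 := by
    have hdm : τ * σ = 2^r * (τ*σ/2^r) + 1 := by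
      have := Nat.div_add_mod (τ*σ) (2^r)
      omega
    refine ⟨((τ*σ)/2^r : ℕ), ?_⟩
    rw [hn]
    have hcast : ((τ*σ:ℕ):ℤ) = (2:ℤ)^r * (((τ*σ)/2^r : ℕ) : ℤ) + 1 := by exact_mod_cast hdm
    omega
  have hUX2 : UX hr hμ (k * ((τ*σ:ℕ):ℤ)) = UX hr hμ k := by
    apply UX_congr hr hμ
    rw [show k * ((τ*σ:ℕ):ℤ) - k = k * (((τ*σ:ℕ):ℤ) - 1) by ring]
    exact Dvd.dvd.mul_left hτσ k
  set Y : A μ := y ^ τ with hYdef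
  set S' : A μ := ∑ i ∈ Finset.range σ, Y ^ i with hS'def
  have hS' : 1 - Y ^ σ = (1 - Y) * S' := by linear_combination geom_sum_mul Y σ
  have hYσ : Y ^ σ = y := by
    rw [hYdef, ← pow_mul]
    have h2 : y ^ (τ*σ) = (UX hr hμ (k * ((τ*σ:ℕ):ℤ))).val := by
      rw [hy, UX, UX, zpow_mul, zpow_natCast, Units.val_pow_eq_pow_val]
    rw [h2, hUX2]
  have heq : (1 - y) = (1 - y) * (S * S') := by
    calc 1 - y = 1 - Y ^ σ := by rw [hYσ]
    _ = (1 - Y) * S' := hS'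
    _ = ((1 - y) * S) * S' := by rw [hYdef, hS]
    _ = (1 - y) * (S * S') := by ring
  have hμk : μ ^ k ≠ 1 := by
    intro h
    have hd := (hμ.zpow_eq_one_iff_dvd k).mp h
    apply hk
    rw [hn]
    exact_mod_cast hd
  have hεy : eps μ (1 - y) ≠ 0 := by
    rw [hy, map_sub, map_one, UX_val_eps]
    exact sub_ne_zero.mpr (Ne.symm hμk)
  have hSS' : S * S' = 1 := by
    apply eps_inj hr hμ
    have h2 : eps μ (1-y) * (1 - eps μ (S*S')) = 0 := by
      have h3 := congrArg (eps μ) heq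
      rw [map_mul] at h3
      linear_combination h3
    rcases mul_eq_zero.mp h2 with h | h
    · exact absurd h hεy
    · rw [map_one]; linear_combination -h
  refine ⟨⟨S, S', hSS', by rw [mul_comm]; exact hSS'⟩, ?_⟩
  rw [hUX, hyτ]
  exact hS

lemma key (hr : 1 ≤ r) (hμ : IsPrimitiveRoot μ (2 ^ r)) :
    ∀ s : ℕ, s < r → ∀ t : ℤ, Odd t →
    ∃ u : (A μ)ˣ, 1 - (UX hr hμ (2 ^ s * t)).val = (1 - xA μ) ^ (2 ^ s) * u.val := by
  intro s
  induction s with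
  | zero =>
    intro _ t ht
    have hk1 : ¬ ((2:ℤ)^r) ∣ (1:ℤ) := by
      intro h
      have h1 := Int.le_of_dvd one_pos h
      have h2 : (2:ℤ)^1 ≤ 2^r := pow_le_pow_right₀ (by norm_num) hr
      omega
    obtain ⟨u, hu⟩ := one_sub_UX_odd hr hμ hk1 ht
    refine ⟨u, ?_⟩
    rw [show ((2:ℤ)^0 * t) = t * 1 by ring, hu,
      show (2:ℕ)^0 = 1 from rfl, pow_one,
      show (UX hr hμ (1:ℤ)).val = xA μ from (by rw [UX, zpow_one]; rfl)]
  | succ s ih =>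
    intro hs t ht
    have hs' : s < r := by omega
    obtain ⟨u₁, hu₁⟩ := ih hs' t ht
    have hodd2 : Odd (t + 2 ^ (r - 1 - s)) := by
      refine ht.add_even ?_
      refine ⟨2 ^ (r - 1 - s - 1), ?_⟩
      have h1 : (2:ℤ)^(r-1-s-1) * 2 = 2^(r-1-s) := by rw [← pow_succ]; congr 1; omega
      linarith
    obtain ⟨u₂, hu₂⟩ := ih hs' (t + 2^(r-1-s)) hodd2
    have hexp : (2:ℤ)^s * (t + 2^(r-1-s)) = 2^s * t + 2^(r-1) := by
      have h1 : (2:ℤ)^s * 2^(r-1-s) = 2^(r-1) := by rw [← pow_add]; congr 1 <;> omega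
      rw [mul_add, h1]
    have hUXm : (UX hr hμ ((2:ℤ)^(r-1))).val = -1 := by
      have hc : ((2:ℤ)^(r-1)) = ((2^(r-1) : ℕ) : ℤ) := by push_cast; ring
      rw [hc]
      exact UX_m hr hμ
    have hsplit : (UX hr hμ (2^s*t + 2^(r-1))).val = -(UX hr hμ (2^s*t)).val := by
      rw [UX, zpow_add, Units.val_mul]
      have h2 : (ux hr hμ ^ ((2:ℤ)^(r-1))).val = -1 := hUXm
      rw [h2]
      rw [UX]
      ring
    have hdouble : (UX hr hμ (2^(s+1)*t)).val
        = (UX hr hμ (2^s*t)).val * (UX hr hμ (2^s*t)).val := by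
      rw [UX, show (2:ℤ)^(s+1)*t = 2^s*t + 2^s*t by ring, zpow_add, Units.val_mul]
      rfl
    refine ⟨u₁ * u₂, ?_⟩
    have calc1 : 1 - (UX hr hμ (2^(s+1)*t)).val
        = (1 - (UX hr hμ (2^s*t)).val) * (1 - (UX hr hμ (2^s*t + 2^(r-1))).val) := by
      rw [hdouble, hsplit]; ring
    rw [calc1, hu₁, ← hexp, hu₂, Units.val_mul,
      show (2:ℕ)^(s+1) = 2^s + 2^s by rw [pow_succ]; omega, pow_add]
    ring

lemma val_lemma (hr : 1 ≤ r) (hμ : IsPrimitiveRoot μ (2 ^ r)) {k : ℤ} {s : ℕ} (hs : s < r)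
    {t : ℤ} (ht : Odd t) (hc : ((2:ℤ) ^ r) ∣ (k - 2 ^ s * t)) :
    ∃ u : (A μ)ˣ, 1 - (UX hr hμ k).val = (1 - xA μ) ^ (2 ^ s) * u.val := by
  rw [UX_congr hr hμ hc]
  exact key hr hμ s hs t ht

lemma v_ge {k : ℤ} {s : ℕ} {t : ℤ} (ht : Odd t) (hc : ((2:ℤ) ^ r) ∣ (k - 2 ^ s * t))
    {w : ℕ} (hw : w ≤ r) (hd : ((2:ℤ) ^ w) ∣ k) : w ≤ s := by
  by_contra h
  push_neg at h
  have h1 : ((2:ℤ) ^ w) ∣ 2 ^ s * t := by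
    have h2 : ((2:ℤ) ^ w) ∣ (k - 2 ^ s * t) := dvd_trans (pow_dvd_pow 2 hw) hc
    have h3 := dvd_sub hd h2
    rw [show k - (k - 2^s*t) = 2^s*t by ring] at h3
    exact h3
  have h4 : (2:ℤ)^s * 2 ∣ 2^s * t := by
    refine dvd_trans ?_ h1
    rw [← pow_succ]
    exact pow_dvd_pow 2 (by omega)
  have h5 : (2:ℤ) ∣ t := (mul_dvd_mul_iff_left (a := (2:ℤ)^s) (by positivity)).mp h4
  rcases h5 with ⟨z, hz⟩
  rcases ht with ⟨w', hw'⟩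
  omega

lemma not_dvd_of_cong {k : ℤ} {s : ℕ} {t : ℤ} (ht : Odd t) (hs : s < r)
    (hc : ((2:ℤ) ^ r) ∣ (k - 2 ^ s * t)) : ¬ ((2:ℤ) ^ r) ∣ k :=
  fun hd => absurd (v_ge ht hc le_rfl hd) (by omega)

lemma decomp {k : ℤ} (hr : 1 ≤ r) (hk : ¬ ((2:ℤ) ^ r) ∣ k) :
    ∃ s : ℕ, s < r ∧ ∃ t : ℤ, Odd t ∧ ((2:ℤ) ^ r) ∣ (k - 2 ^ s * t) := by
  set n : ℤ := 2 ^ r with hn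
  have hnpos : 0 < n := by positivity
  set k' := k % n with hk'
  have h0 : 0 ≤ k' := Int.emod_nonneg k (ne_of_gt hnpos)
  have h1 : k' < n := Int.emod_lt_of_pos k hnpos
  have hne : k' ≠ 0 := fun h => hk (Int.dvd_of_emod_eq_zero h)
  set κ : ℕ := k'.toNat with hκ
  have hκ' : (κ:ℤ) = k' := Int.toNat_of_nonneg h0
  have hκ0 : κ ≠ 0 := by omega
  obtain ⟨s, τ, hτodd, hτ⟩ := Nat.exists_eq_two_pow_mul_odd hκ0
  have hτpos : 0 < τ := by rcases hτodd with ⟨w, hw⟩; omega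
  have hs : s < r := by
    by_contra h
    push_neg at h
    have h2 : 2^r ≤ 2^s := Nat.pow_le_pow_right (by norm_num) h
    have h3 : 2^s ≤ κ := by
      calc 2^s ≤ 2^s * τ := Nat.le_mul_of_pos_right _ hτpos
      _ = κ := hτ.symm
    have h4 : (κ:ℤ) < n := by omega
    rw [hn] at h4
    have h5 : ((2:ℕ)^r : ℤ) ≤ (κ:ℤ) := by exact_mod_cast le_trans h2 h3
    push_cast at h5
    omega
  refine ⟨s, hs, (τ:ℤ), by exact_mod_cast hτodd, ?_⟩
  have hd : n ∣ k - k' := by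
    refine ⟨k / n, ?_⟩
    have := Int.mul_ediv_add_emod k n
    omega
  have hval : k' = (2:ℤ)^s * (τ:ℤ) := by
    rw [← hκ']
    exact_mod_cast congrArg (fun x : ℕ => (x:ℤ)) hτ
  rw [← hval]
  exact hd

lemma ne_of_lt_val (hr : 1 ≤ r) (hμ : IsPrimitiveRoot μ (2 ^ r)) {p q : ℕ} (hpq : p < q)
    (u w : (A μ)ˣ) :
    (1 - xA μ) ^ p * u.val ≠ (1 - xA μ) ^ q * w.val := by
  intro h
  have hπ : (1:ℂ) - μ ≠ 0 := by
    refine sub_ne_zero.mpr (Ne.symm (hμ.ne_one ?_))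
    exact Nat.one_lt_two_pow (by omega)
  have h2 : eps μ ((1 - xA μ)^p * u.val) = eps μ ((1 - xA μ)^q * w.val) := by rw [h]
  rw [map_mul, map_mul, map_pow, map_pow, map_sub, map_one, eps_x] at h2
  have hq : q = p + (q - p) := by omega
  rw [hq, pow_add, mul_assoc] at h2
  have h3 : eps μ u.val = (1-μ)^(q-p) * eps μ w.val :=
    mul_left_cancel₀ (pow_ne_zero p hπ) h2
  have h4 : u.val = (1 - xA μ)^(q-p) * w.val := by
    apply eps_inj hr hμ
    rw [map_mul, map_pow, map_sub, map_one, eps_x]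
    exact h3
  have h5 := congrArg (phi hr hμ) h4
  rw [map_mul, map_pow, map_sub, map_one, phi_x hr hμ, phi_unit hr hμ, phi_unit hr hμ,
    sub_self, zero_pow (by omega), zero_mul] at h5
  exact one_ne_zero h5




theorem stmt_12' (r : ℕ) (hr : 1 ≤ r) (μ : ℂ) (hμ : IsPrimitiveRoot μ (2 ^ r))
    (a b c d : ℤ) :
    (Matrix.det ![![μ ^ c - μ ^ a, μ ^ d - μ ^ b],
        ![μ ^ (c + d) - μ ^ (a + b),
          μ ^ (c + 2 * d + 1) - μ ^ (a + 2 * b + 1)]] = 0)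
      ↔ (μ ^ a = μ ^ c ∧ μ ^ b = μ ^ d) := by
  have h0 : μ ≠ 0 := hμ.ne_zero (by positivity)
  have hz : ∀ u v : ℤ, μ ^ (u + v) = μ ^ u * μ ^ v := fun u v => zpow_add₀ h0 u v
  have hdet : Matrix.det ![![μ ^ c - μ ^ a, μ ^ d - μ ^ b],
        ![μ ^ (c + d) - μ ^ (a + b),
          μ ^ (c + 2 * d + 1) - μ ^ (a + 2 * b + 1)]]
      = (μ^c - μ^a) * (μ^(c+2*d+1) - μ^(a+2*b+1)) - (μ^d - μ^b) * (μ^(c+d) - μ^(a+b)) := by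
    erw [Matrix.det_fin_two]
    simp [Matrix.cons_val_zero, Matrix.cons_val_one, Matrix.head_cons]
  set α : ℤ := a - c with hαdef
  set β : ℤ := b - d with hβdef
  have ea : μ ^ a = μ ^ c * μ ^ α := by rw [← hz]; congr 1; omega
  have eb : μ ^ b = μ ^ d * μ ^ β := by rw [← hz]; congr 1; omega
  have ecd : μ ^ (c+d) = μ ^ c * μ ^ d := by rw [← hz]
  have eab : μ ^ (a+b) = μ ^ c * μ ^ d * (μ ^ α * μ ^ β) := by
    rw [← hz, ← hz, ← hz]; congr 1; omega
  have e1 : μ ^ (c+2*d+1) = μ ^ c * μ ^ d * μ ^ d * μ ^ (1:ℤ) := by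
    rw [← hz, ← hz, ← hz]; congr 1; ring
  have e2 : μ ^ (a+2*b+1) = μ ^ c * μ ^ d * μ ^ d * μ ^ (1:ℤ) * (μ ^ α * (μ ^ β * μ ^ β)) := by
    rw [← hz, ← hz, ← hz, ← hz, ← hz, ← hz]; congr 1; omega
  have hc1 : μ ^ (c+1) = μ ^ c * μ ^ (1:ℤ) := by rw [← hz]
  have hab1 : μ ^ (α+β) = μ ^ α * μ ^ β := by rw [← hz]
  have hab2 : μ ^ (α+2*β) = μ ^ α * (μ ^ β * μ ^ β) := by rw [← hz, ← hz]; congr 1; ring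
  have hcast : (((2:ℕ)^r : ℕ) : ℤ) = (2:ℤ)^r := by push_cast; ring
  have hiff : ∀ k : ℤ, μ ^ k = 1 ↔ ((2:ℤ)^r ∣ k) := fun k => by
    rw [hμ.zpow_eq_one_iff_dvd, hcast]
  constructor
  · -- hard direction
    intro hdet0
    by_contra hcon
    have hE : μ^(c+1) * ((1 - μ^α) * (1 - μ^(α+2*β))) = (1 - μ^β) * (1 - μ^(α+β)) := by
      have hcdd : μ^c * μ^d * μ^d ≠ 0 :=
        mul_ne_zero (mul_ne_zero (zpow_ne_zero _ h0) (zpow_ne_zero _ h0)) (zpow_ne_zero _ h0)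
      have hbig : μ^c * μ^d * μ^d *
          (μ^(c+1) * ((1 - μ^α) * (1 - μ^(α+2*β))) - (1 - μ^β) * (1 - μ^(α+β))) = 0 := by
        rw [hc1, hab2, hab1]
        rw [hdet, ea, eb, ecd, eab, e1, e2] at hdet0
        linear_combination hdet0
      have hE0 := (mul_eq_zero.mp hbig).resolve_left hcdd
      linear_combination hE0
    have hcon' : ¬ (((2:ℤ)^r ∣ α) ∧ ((2:ℤ)^r ∣ β)) := by
      rintro ⟨hdα, hdβ⟩
      exact hcon ⟨by rw [ea, (hiff α).mpr hdα, mul_one],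
                  by rw [eb, (hiff β).mpr hdβ, mul_one]⟩
    by_cases hDα : (2:ℤ)^r ∣ α <;> by_cases hDβ : (2:ℤ)^r ∣ β
    · exact hcon' ⟨hDα, hDβ⟩
    · -- α ≡ 0, β ≢ 0 : LHS = 0, RHS ≠ 0
      have hμα : μ^α = 1 := (hiff α).mpr hDα
      have hnd : ¬ (2:ℤ)^r ∣ (α+β) := fun h => hDβ (by
        have h2 := dvd_sub h hDα
        rw [show α + β - α = β by ring] at h2
        exact h2)
      have hQ : (1 - μ^β) * (1 - μ^(α+β)) ≠ 0 :=
        mul_ne_zero (sub_ne_zero.mpr fun h => hDβ ((hiff β).mp h.symm))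
          (sub_ne_zero.mpr fun h => hnd ((hiff _).mp h.symm))
      exact hQ (by rw [← hE, hμα]; ring)
    · -- α ≢ 0, β ≡ 0 : RHS = 0, LHS ≠ 0
      have hμβ : μ^β = 1 := (hiff β).mpr hDβ
      have hnd : ¬ (2:ℤ)^r ∣ (α+2*β) := fun h => hDα (by
        have h2 := dvd_sub h (hDβ.mul_left 2)
        rw [show α + 2*β - 2*β = α by ring] at h2
        exact h2)
      have hP : μ^(c+1) * ((1 - μ^α) * (1 - μ^(α+2*β))) ≠ 0 :=
        mul_ne_zero (zpow_ne_zero _ h0)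
          (mul_ne_zero (sub_ne_zero.mpr fun h => hDα ((hiff α).mp h.symm))
            (sub_ne_zero.mpr fun h => hnd ((hiff _).mp h.symm)))
      exact hP (by rw [hE, hμβ]; ring)
    · -- main case
      obtain ⟨i, hi, t₁, ht₁, hcα⟩ := decomp hr hDα
      obtain ⟨j, hj, t₂, ht₂, hcβ⟩ := decomp hr hDβ
      have hAeq : (UX hr hμ (c+1)).val *
            ((1 - (UX hr hμ α).val) * (1 - (UX hr hμ (α+2*β)).val))
          = (1 - (UX hr hμ β).val) * (1 - (UX hr hμ (α+β)).val) := by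
        apply eps_inj hr hμ
        simp only [map_mul, map_sub, map_one, UX_val_eps]
        exact hE
      rcases lt_trichotomy i j with hij | hij | hij
      · -- i < j : P-exps (2^i, 2^i), Q-exps (2^j, 2^i)
        obtain ⟨δ, hδ⟩ : ∃ δ, j = i + δ + 1 := ⟨j - i - 1, by omega⟩
        have h2j : (2:ℤ)^j = 2^i * 2^(δ+1) := by rw [← pow_add]; congr 1 <;> omega
        have hev1 : Even ((2:ℤ)^(δ+1) * t₂) :=
          ⟨2^δ * t₂, by rw [show (2:ℤ)^(δ+1) = 2^δ*2 from pow_succ 2 δ]; ring⟩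
        have hev2 : Even ((2:ℤ)^(δ+2) * t₂) :=
          ⟨2^(δ+1) * t₂, by rw [show (2:ℤ)^(δ+2) = 2^(δ+1)*2 from pow_succ 2 (δ+1)]; ring⟩
        have hcαβ : (2:ℤ)^r ∣ ((α+β) - 2^i*(t₁ + 2^(δ+1)*t₂)) := by
          have heq : (α+β) - 2^i*(t₁ + 2^(δ+1)*t₂) = (α - 2^i*t₁) + (β - 2^j*t₂) := by
            rw [h2j]; ring
          rw [heq]; exact dvd_add hcα hcβ
        have hcα2β : (2:ℤ)^r ∣ ((α+2*β) - 2^i*(t₁ + 2^(δ+2)*t₂)) := by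
          have h2' : (2:ℤ)^i * 2^(δ+2) = 2 * 2^j := by
            rw [h2j, show (2:ℤ)^(δ+2) = 2^(δ+1)*2 from pow_succ 2 (δ+1)]; ring
          have heq : (α+2*β) - 2^i*(t₁ + 2^(δ+2)*t₂) = (α - 2^i*t₁) + 2*(β - 2^j*t₂) := by
            linear_combination -t₂ * h2'
          rw [heq]; exact dvd_add hcα (hcβ.mul_left 2)
        obtain ⟨u₁, hu₁⟩ := val_lemma hr hμ hi ht₁ hcα
        obtain ⟨u₂, hu₂⟩ := val_lemma hr hμ hi (ht₁.add_even hev2) hcα2β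
        obtain ⟨u₃, hu₃⟩ := val_lemma hr hμ hj ht₂ hcβ
        obtain ⟨u₄, hu₄⟩ := val_lemma hr hμ hi (ht₁.add_even hev1) hcαβ
        rw [hu₁, hu₂, hu₃, hu₄] at hAeq
        have hlt : (2:ℕ)^i + 2^i < 2^j + 2^i := by
          have := Nat.pow_lt_pow_right one_lt_two hij
          omega
        exact ne_of_lt_val hr hμ hlt (UX hr hμ (c+1) * (u₁ * u₂)) (u₃ * u₄)
          (by rw [Units.val_mul, Units.val_mul, Units.val_mul, pow_add, pow_add]
              try linear_combination hAeq)
      · -- i = j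
        subst hij
        have hcα2β : (2:ℤ)^r ∣ ((α+2*β) - 2^i*(t₁ + 2*t₂)) := by
          have heq : (α+2*β) - 2^i*(t₁ + 2*t₂) = (α - 2^i*t₁) + 2*(β - 2^i*t₂) := by ring
          rw [heq]; exact dvd_add hcα (hcβ.mul_left 2)
        have hoddα2β : Odd (t₁ + 2*t₂) := ht₁.add_even ⟨t₂, by ring⟩
        obtain ⟨z, hzt⟩ : Even (t₁ + t₂) := ht₁.add_odd ht₂
        have hdvd : (2:ℤ)^(i+1) ∣ (α+β) := by
          obtain ⟨w₁, hw₁⟩ := hcα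
          obtain ⟨w₂, hw₂⟩ := hcβ
          have h2 : (2:ℤ)^r = 2^(i+1) * 2^(r-1-i) := by rw [← pow_add]; congr 1 <;> omega
          refine ⟨2^(r-1-i)*(w₁+w₂) + z, ?_⟩
          linear_combination hw₁ + hw₂ + (2:ℤ)^i * hzt + (w₁ + w₂) * h2
        by_cases hnd : (2:ℤ)^r ∣ (α+β)
        · have hP : μ^(c+1) * ((1 - μ^α) * (1 - μ^(α+2*β))) ≠ 0 :=
            mul_ne_zero (zpow_ne_zero _ h0)
              (mul_ne_zero (sub_ne_zero.mpr fun h => hDα ((hiff α).mp h.symm))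
                (sub_ne_zero.mpr fun h =>
                  (not_dvd_of_cong hoddα2β hi hcα2β) ((hiff _).mp h.symm)))
          exact hP (by rw [hE, (hiff _).mpr hnd]; ring)
        · obtain ⟨i'', hi'', t'', ht'', hc''⟩ := decomp hr hnd
          have hge : i + 1 ≤ i'' := v_ge ht'' hc'' (by omega) hdvd
          obtain ⟨u₁, hu₁⟩ := val_lemma hr hμ hi ht₁ hcα
          obtain ⟨u₂, hu₂⟩ := val_lemma hr hμ hi hoddα2β hcα2β
          obtain ⟨u₃, hu₃⟩ := val_lemma hr hμ hi ht₂ hcβ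
          obtain ⟨u₄, hu₄⟩ := val_lemma hr hμ hi'' ht'' hc''
          rw [hu₁, hu₂, hu₃, hu₄] at hAeq
          have hlt : (2:ℕ)^i + 2^i < 2^i + 2^i'' := by
            have e2' : (2:ℕ)^(i+1) ≤ 2^i'' := Nat.pow_le_pow_right (by norm_num) hge
            have e1' : (2:ℕ)^(i+1) = 2^i * 2 := pow_succ 2 i
            have e3' : 0 < (2:ℕ)^i := by positivity
            omega
          exact ne_of_lt_val hr hμ hlt (UX hr hμ (c+1) * (u₁ * u₂)) (u₃ * u₄)
            (by rw [Units.val_mul, Units.val_mul, Units.val_mul, pow_add, pow_add]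
                try linear_combination hAeq)
      · -- i > j
        obtain ⟨δ, hδ⟩ : ∃ δ, i = j + δ + 1 := ⟨i - j - 1, by omega⟩
        have h2i : (2:ℤ)^i = 2^j * 2^(δ+1) := by rw [← pow_add]; congr 1 <;> omega
        have hev1 : Even ((2:ℤ)^(δ+1) * t₁) :=
          ⟨2^δ * t₁, by rw [show (2:ℤ)^(δ+1) = 2^δ*2 from pow_succ 2 δ]; ring⟩
        have hcαβ : (2:ℤ)^r ∣ ((α+β) - 2^j*(2^(δ+1)*t₁ + t₂)) := by
          have heq : (α+β) - 2^j*(2^(δ+1)*t₁ + t₂) = (α - 2^i*t₁) + (β - 2^j*t₂) := by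
            rw [h2i]; ring
          rw [heq]; exact dvd_add hcα hcβ
        have hoddαβ : Odd ((2:ℤ)^(δ+1)*t₁ + t₂) := hev1.add_odd ht₂
        obtain ⟨u₃, hu₃⟩ := val_lemma hr hμ hj ht₂ hcβ
        obtain ⟨u₄, hu₄⟩ := val_lemma hr hμ hj hoddαβ hcαβ
        by_cases hδ0 : δ = 0
        · -- i = j + 1
          subst hδ0
          have hieq : i = j + 1 := by omega
          subst hieq
          obtain ⟨z, hzt⟩ : Even (t₁ + t₂) := ht₁.add_odd ht₂
          have hdvd : (2:ℤ)^(j+2) ∣ (α+2*β) := by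
            obtain ⟨w₁, hw₁⟩ := hcα
            obtain ⟨w₂, hw₂⟩ := hcβ
            have h2 : (2:ℤ)^r = 2^(j+2) * 2^(r-2-j) := by rw [← pow_add]; congr 1 <;> omega
            refine ⟨2^(r-2-j)*(w₁+2*w₂) + z, ?_⟩
            linear_combination hw₁ + 2 * hw₂ + (2:ℤ)^(j+1) * hzt + (w₁ + 2*w₂) * h2
          by_cases hnd : (2:ℤ)^r ∣ (α+2*β)
          · have hQ : (1 - μ^β) * (1 - μ^(α+β)) ≠ 0 :=
              mul_ne_zero (sub_ne_zero.mpr fun h => hDβ ((hiff β).mp h.symm))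
                (sub_ne_zero.mpr fun h =>
                  (not_dvd_of_cong hoddαβ hj hcαβ) ((hiff _).mp h.symm))
            exact hQ (by rw [← hE, (hiff _).mpr hnd]; ring)
          · obtain ⟨i', hi', t', ht', hc'⟩ := decomp hr hnd
            have hge : j + 2 ≤ i' := v_ge ht' hc' (by omega) hdvd
            obtain ⟨u₁, hu₁⟩ := val_lemma hr hμ hi ht₁ hcα
            obtain ⟨u₂, hu₂⟩ := val_lemma hr hμ hi' ht' hc'
            rw [hu₁, hu₂, hu₃, hu₄] at hAeq
            have hlt : (2:ℕ)^j + 2^j < 2^(j+1) + 2^i' := by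
              have e1' : (2:ℕ)^(j+1) = 2^j * 2 := pow_succ 2 j
              have e3' : 0 < (2:ℕ)^i' := by positivity
              have e4' : 0 < (2:ℕ)^j := by positivity
              omega
            exact (ne_of_lt_val hr hμ hlt (u₃ * u₄) (UX hr hμ (c+1) * (u₁ * u₂))
              (by rw [Units.val_mul, Units.val_mul, Units.val_mul, pow_add, pow_add]
                  linear_combination -hAeq))
        · -- i > j + 1
          have hδpos : 1 ≤ δ := by omega
          have hcα2β : (2:ℤ)^r ∣ ((α+2*β) - 2^(j+1)*(2^δ*t₁ + t₂)) := by
            have h2' : (2:ℤ)^(j+1) * 2^δ = 2^i := by rw [← pow_add]; congr 1 <;> omega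
            have heq : (α+2*β) - 2^(j+1)*(2^δ*t₁ + t₂) = (α - 2^i*t₁) + 2*(β - 2^j*t₂) := by
              linear_combination -t₁ * h2'
            rw [heq]; exact dvd_add hcα (hcβ.mul_left 2)
          have hoddα2β : Odd ((2:ℤ)^δ*t₁ + t₂) := by
            refine Even.add_odd ?_ ht₂
            refine ⟨2^(δ-1)*t₁, ?_⟩
            have : (2:ℤ)^(δ-1) * 2 = 2^δ := by rw [← pow_succ]; congr 1; omega
            linear_combination t₁ * this.symm
          have hj1 : j + 1 < r := by omega
          obtain ⟨u₁, hu₁⟩ := val_lemma hr hμ hi ht₁ hcα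
          obtain ⟨u₂, hu₂⟩ := val_lemma hr hμ hj1 hoddα2β hcα2β
          rw [hu₁, hu₂, hu₃, hu₄] at hAeq
          have hlt : (2:ℕ)^j + 2^j < 2^i + 2^(j+1) := by
            have e1' : (2:ℕ)^(j+1) = 2^j * 2 := pow_succ 2 j
            have e3' : 0 < (2:ℕ)^i := by positivity
            have e4' : 0 < (2:ℕ)^j := by positivity
            omega
          exact (ne_of_lt_val hr hμ hlt (u₃ * u₄) (UX hr hμ (c+1) * (u₁ * u₂))
            (by rw [Units.val_mul, Units.val_mul, Units.val_mul, pow_add, pow_add]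
                linear_combination -hAeq))
  · -- easy direction
    rintro ⟨h1, h2⟩
    have hα1 : μ ^ α = 1 := by
      have h3 : μ^c * μ^α = μ^c * 1 := by rw [mul_one]; exact ea.symm.trans h1
      exact mul_left_cancel₀ (zpow_ne_zero c h0) h3
    have hβ1 : μ ^ β = 1 := by
      have h3 : μ^d * μ^β = μ^d * 1 := by rw [mul_one]; exact eb.symm.trans h2
      exact mul_left_cancel₀ (zpow_ne_zero d h0) h3
    rw [hdet, ea, eb, ecd, eab, e1, e2, hα1, hβ1]
    ring



end Stmt12

/-- For `μ` a primitive `2^r`-th root of unity and integers `a,b,c,d`, the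
determinant of the matrix with rows `(μ^c - μ^a, μ^d - μ^b)` and
`(μ^(c+d) - μ^(a+b), μ^(c+2d+1) - μ^(a+2b+1))` vanishes iff `μ^a = μ^c` and
`μ^b = μ^d`. -/
theorem stmt_12 (r : ℕ) (hr : 1 ≤ r) (μ : ℂ) (hμ : IsPrimitiveRoot μ (2 ^ r))
    (a b c d : ℤ) :
    (Matrix.det ![![μ ^ c - μ ^ a, μ ^ d - μ ^ b],
        ![μ ^ (c + d) - μ ^ (a + b),
          μ ^ (c + 2 * d + 1) - μ ^ (a + 2 * b + 1)]] = 0)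
      ↔ (μ ^ a = μ ^ c ∧ μ ^ b = μ ^ d) := by
  exact Stmt12.stmt_12' r hr μ hμ a b c d
end

section
/- For even m, and A the set of square roots of unity {1, −1}, the maximum number of pairwise nonintersecting 2-dimensional subspaces of ℂ^m generated by vectors in A^m is exactly 2^{m−2}. -/
/-!
A plane spanned by two independent `±1`-vectors `v₁, v₂` contains the four distinct
`±1`-vectors `±v₁, ±v₂`, and trivially intersecting planes share no nonzero vector, so at most
`2^m / 4` such planes fit.

Conversely, for `m = 2k + 2` split the coordinates into `k + 1` consecutive pairs and attach to
each pair a sign pair `(p, q)`; the plane of the sign pattern is spanned by the vector with blocks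
`(p, q)` and the vector with blocks `(q, -p)`. On a block, `a • (p, q) + b • (q, -p)` is the matrix
`[[p, q], [q, -p]]` applied to `(a, b)`, and the difference of two such matrices for distinct sign
pairs `(P, Q) ≠ 0` is invertible, with determinant `-(P² + Q²)`. Fixing the first block to `(1, 1)`
forces a common vector of two planes to have the same coefficients in both, and a block where the
patterns differ then forces these coefficients to vanish. This gives `4^k = 2^(m-2)` planes.
-/

open Submodule Module Finset

theorem linearIndependent_pair_iff_finrank_span_eq_two {K V : Type*} [Field K] [AddCommGroup V]
    [Module K V] {v₁ v₂ : V} :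
    LinearIndependent K ![v₁, v₂] ↔ finrank K (span K {v₁, v₂}) = 2 := by
  rw [linearIndependent_iff_card_eq_finrank_span, Set.finrank, Matrix.range_cons_cons_empty]
  simp [eq_comm]

theorem card_insert_neg_pair_eq_four {K V : Type*} [Field K] [CharZero K] [AddCommGroup V]
    [Module K V] [DecidableEq V] {v₁ v₂ : V}
    (h : LinearIndependent K ![v₁, v₂]) : #{v₁, -v₁, v₂, -v₂} = 4 := by
  have key := LinearIndependent.pair_iff.1 h
  refine card_eq_four.2 ⟨v₁, -v₁, v₂, -v₂, ?_, ?_, ?_, ?_, ?_, ?_, rfl⟩ <;> intro e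
  · simpa using key 2 0 (by linear_combination (norm := module) e)
  · simpa using key 1 (-1) (by linear_combination (norm := module) e)
  · simpa using key 1 1 (by linear_combination (norm := module) e)
  · simpa using key 1 1 (by linear_combination (norm := module) -e)
  · simpa using key 1 (-1) (by linear_combination (norm := module) -e)
  · simpa using key 0 2 (by linear_combination (norm := module) e)

open scoped Classical in
theorem mul_card_le_card_of_inf_eq_bot {R V : Type*} [Semiring R] [AddCommMonoid V] [Module R V]
    {T : Finset V} (hT : 0 ∉ T) {S : Finset (Submodule R V)}
    (hS : ∀ W ∈ S, ∀ W' ∈ S, W ≠ W' → W ⊓ W' = ⊥) {r : ℕ}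
    (hr : ∀ W ∈ S, r ≤ #{v ∈ T | v ∈ W}) : r * #S ≤ #T := by
  have hdisj : (S : Set (Submodule R V)).PairwiseDisjoint fun W => {v ∈ T | v ∈ W} := by
    intro W hW W' hW' hne
    refine disjoint_filter.2 fun v hv hvW hvW' => hT ?_
    obtain rfl : v = 0 := by simpa [hS W hW W' hW' hne] using mem_inf.2 ⟨hvW, hvW'⟩
    exact hv
  calc r * #S = ∑ _W ∈ S, r := by rw [sum_const, smul_eq_mul, mul_comm]
    _ ≤ ∑ W ∈ S, #{v ∈ T | v ∈ W} := sum_le_sum hr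
    _ = #(S.biUnion fun W => {v ∈ T | v ∈ W}) := (card_biUnion hdisj).symm
    _ ≤ #T := card_le_card (biUnion_subset.2 fun _ _ => filter_subset _ _)

-- The coefficient matrix `[[P, Q], [Q, -P]]` has determinant `-(P ^ 2 + Q ^ 2)`.
theorem eq_zero_of_mul_add_mul_eq_zero {K : Type*} [Field K] {a b P Q : K}
    (hPQ : P ^ 2 + Q ^ 2 ≠ 0) (h₁ : a * P + b * Q = 0) (h₂ : a * Q - b * P = 0) :
    a = 0 ∧ b = 0 := by
  constructor
  · refine (mul_eq_zero.1 ?_).resolve_right hPQ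
    linear_combination P * h₁ + Q * h₂
  · refine (mul_eq_zero.1 ?_).resolve_right hPQ
    linear_combination Q * h₁ - P * h₂

def signVectors (K : Type*) [Ring K] [DecidableEq K] (m : ℕ) : Finset (Fin m → K) :=
  Fintype.piFinset fun _ => {1, -1}

section
variable {K : Type*} [Ring K] [DecidableEq K] {m : ℕ}

theorem mem_signVectors {v : Fin m → K} : v ∈ signVectors K m ↔ ∀ i, v i = 1 ∨ v i = -1 := by
  simp [signVectors]

theorem card_signVectors [CharZero K] : #(signVectors K m) = 2 ^ m := by
  simp [signVectors, card_pair (by norm_num : (1 : K) ≠ -1)]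

theorem zero_notMem_signVectors [Nontrivial K] (hm : 0 < m) : 0 ∉ signVectors K m :=
  fun h => by simpa using mem_signVectors.1 h ⟨0, hm⟩

theorem neg_mem_signVectors {v : Fin m → K} (hv : v ∈ signVectors K m) :
    -v ∈ signVectors K m := by
  rw [mem_signVectors] at hv ⊢
  intro i
  rcases hv i with h | h <;> simp [h]

end

section BlockPlane

variable (K : Type*) [Field K]

def boolSign (b : Bool) : K := if b then 1 else -1

variable {K}

theorem boolSign_eq_one_or (b : Bool) : boolSign K b = 1 ∨ boolSign K b = -1 := by
  cases b <;> simp [boolSign]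

theorem boolSign_sq_add_boolSign_sq (p q : Bool) : boolSign K p ^ 2 + boolSign K q ^ 2 = 2 := by
  cases p <;> cases q <;> norm_num [boolSign]

theorem boolSign_sub_sq_add_ne_zero [CharZero K] {p q p' q' : Bool} (h : (p, q) ≠ (p', q')) :
    (boolSign K p - boolSign K p') ^ 2 + (boolSign K q - boolSign K q') ^ 2 ≠ 0 := by
  revert h
  cases p <;> cases q <;> cases p' <;> cases q' <;> norm_num [boolSign]

variable (K) (m : ℕ)

def blockVec (s : ℕ → Bool × Bool) : Fin m → K := fun i =>
  if i.val % 2 = 0 then boolSign K (s (i.val / 2)).1 else boolSign K (s (i.val / 2)).2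

def blockVecRot (s : ℕ → Bool × Bool) : Fin m → K := fun i =>
  if i.val % 2 = 0 then boolSign K (s (i.val / 2)).2 else -boolSign K (s (i.val / 2)).1

def blockPlane (s : ℕ → Bool × Bool) : Submodule K (Fin m → K) :=
  span K {blockVec K m s, blockVecRot K m s}

variable {K m} (s t : ℕ → Bool × Bool)

theorem blockVec_apply_eq_one_or (i : Fin m) : blockVec K m s i = 1 ∨ blockVec K m s i = -1 := by
  unfold blockVec
  split_ifs <;> exact boolSign_eq_one_or _

theorem blockVecRot_apply_eq_one_or (i : Fin m) :
    blockVecRot K m s i = 1 ∨ blockVecRot K m s i = -1 := by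
  unfold blockVecRot
  split_ifs
  · exact boolSign_eq_one_or _
  · rcases boolSign_eq_one_or (K := K) (s (i.val / 2)).1 with h | h <;> simp [h]

theorem smul_blockVec_add_smul_blockVecRot_apply_even (a b : K) (j : ℕ) (hj : 2 * j < m) :
    (a • blockVec K m s + b • blockVecRot K m s) ⟨2 * j, hj⟩ =
      a * boolSign K (s j).1 + b * boolSign K (s j).2 := by
  simp [blockVec, blockVecRot]

theorem smul_blockVec_add_smul_blockVecRot_apply_odd (a b : K) (j : ℕ) (hj : 2 * j + 1 < m) :
    (a • blockVec K m s + b • blockVecRot K m s) ⟨2 * j + 1, hj⟩ =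
      a * boolSign K (s j).2 - b * boolSign K (s j).1 := by
  simp [blockVec, blockVecRot, Nat.add_div, sub_eq_add_neg]

theorem linearIndependent_blockVec [CharZero K] (hm : 2 ≤ m) :
    LinearIndependent K ![blockVec K m s, blockVecRot K m s] := by
  refine LinearIndependent.pair_iff.2 fun a b hab => ?_
  have h₁ := smul_blockVec_add_smul_blockVecRot_apply_even (m := m) s a b 0 (by omega)
  have h₂ := smul_blockVec_add_smul_blockVecRot_apply_odd (m := m) s a b 0 (by omega)
  rw [hab] at h₁ h₂
  exact eq_zero_of_mul_add_mul_eq_zero (by rw [boolSign_sq_add_boolSign_sq]; norm_num)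
    h₁.symm h₂.symm

theorem finrank_blockPlane [CharZero K] (hm : 2 ≤ m) : finrank K (blockPlane K m s) = 2 :=
  linearIndependent_pair_iff_finrank_span_eq_two.1 (linearIndependent_blockVec s hm)

theorem blockPlane_inf_eq_bot [CharZero K] (h₀ : s 0 = t 0) {j : ℕ} (hj : 2 * j + 1 < m)
    (hst : s j ≠ t j) : blockPlane K m s ⊓ blockPlane K m t = ⊥ := by
  refine eq_bot_iff.2 fun u hu => ?_
  obtain ⟨⟨a, b, rfl⟩, ⟨c, d, hcd⟩⟩ := And.imp mem_span_pair.1 mem_span_pair.1 (mem_inf.1 hu)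
  have block (i : ℕ) (hi : 2 * i + 1 < m) :=
    And.intro (congrFun hcd ⟨2 * i, by omega⟩) (congrFun hcd ⟨2 * i + 1, hi⟩)
  obtain ⟨e₁, e₂⟩ := block 0 (by omega)
  obtain ⟨e₃, e₄⟩ := block j hj
  simp only [smul_blockVec_add_smul_blockVecRot_apply_even,
    smul_blockVec_add_smul_blockVecRot_apply_odd, h₀] at e₁ e₂ e₃ e₄
  obtain ⟨rfl, rfl⟩ : c = a ∧ d = b := by
    have := eq_zero_of_mul_add_mul_eq_zero (a := c - a) (b := d - b)
      (P := boolSign K (t 0).1) (Q := boolSign K (t 0).2)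
      (by rw [boolSign_sq_add_boolSign_sq]; norm_num) (by linear_combination e₁)
      (by linear_combination e₂)
    exact ⟨sub_eq_zero.1 this.1, sub_eq_zero.1 this.2⟩
  obtain ⟨rfl, rfl⟩ := eq_zero_of_mul_add_mul_eq_zero (a := c) (b := d)
    (boolSign_sub_sq_add_ne_zero hst) (by linear_combination -e₃) (by linear_combination -e₄)
  simp

end BlockPlane

def blockSigns {k : ℕ} (y : Fin k → Bool × Bool) : ℕ → Bool × Bool
  | 0 => (true, true)
  | j + 1 => if h : j < k then y ⟨j, h⟩ else (true, true)

section
variable {K : Type*} [Field K] [CharZero K] {m : ℕ}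

theorem exists_finset_card_eq_four_pow {k : ℕ} (hk : 2 * k + 2 ≤ m) :
    ∃ S : Finset (Submodule K (Fin m → K)), #S = 4 ^ k ∧
      (∀ W ∈ S, ∃ v1 v2 : Fin m → K,
        (∀ i, v1 i = 1 ∨ v1 i = -1) ∧ (∀ i, v2 i = 1 ∨ v2 i = -1) ∧
        W = span K {v1, v2} ∧ finrank K W = 2) ∧
      ∀ W ∈ S, ∀ W' ∈ S, W ≠ W' → W ⊓ W' = ⊥ := by
  classical
  let P (y : Fin k → Bool × Bool) := blockPlane K m (blockSigns y)
  have hP : ∀ y z, y ≠ z → P y ⊓ P z = ⊥ := by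
    intro y z hyz
    obtain ⟨j, hj⟩ := Function.ne_iff.1 hyz
    refine blockPlane_inf_eq_bot _ _ rfl (j := j.val + 1) ?_ (by simpa [blockSigns] using hj)
    omega
  have hP_finrank (y) : finrank K (P y) = 2 := finrank_blockPlane _ (by omega)
  have hP_inj : Function.Injective P := fun y z hyz => by_contra fun hne => by
    have hz : P z = ⊥ := by simpa [hyz] using hP y z hne
    have h2 := hP_finrank z
    rw [hz, finrank_bot] at h2
    exact absurd h2 (by norm_num)
  refine ⟨univ.image P, ?_, ?_, ?_⟩
  · rw [card_image_of_injective _ hP_inj]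
    simp
  · simp only [mem_image]
    rintro _ ⟨y, -, rfl⟩
    exact ⟨_, _, blockVec_apply_eq_one_or _, blockVecRot_apply_eq_one_or _, rfl, hP_finrank y⟩
  · simp only [mem_image]
    rintro _ ⟨y, -, rfl⟩ _ ⟨z, -, rfl⟩ hne
    exact hP y z (ne_of_apply_ne P hne)

theorem four_mul_card_le_two_pow (hm : 0 < m) {S : Finset (Submodule K (Fin m → K))}
    (hS₁ : ∀ W ∈ S, ∃ v1 v2 : Fin m → K,
        (∀ i, v1 i = 1 ∨ v1 i = -1) ∧ (∀ i, v2 i = 1 ∨ v2 i = -1) ∧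
        W = span K {v1, v2} ∧ finrank K W = 2)
    (hS₂ : ∀ W ∈ S, ∀ W' ∈ S, W ≠ W' → W ⊓ W' = ⊥) : 4 * #S ≤ 2 ^ m := by
  classical
  rw [← card_signVectors (K := K)]
  refine mul_card_le_card_of_inf_eq_bot (zero_notMem_signVectors hm) hS₂ fun W hW => ?_
  obtain ⟨v₁, v₂, h₁, h₂, rfl, hW⟩ := hS₁ W hW
  rw [← card_insert_neg_pair_eq_four (linearIndependent_pair_iff_finrank_span_eq_two.2 hW)]
  refine card_le_card fun v hv => mem_filter.2 ?_
  have hv₁ : v₁ ∈ span K {v₁, v₂} := subset_span (by simp)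
  have hv₂ : v₂ ∈ span K {v₁, v₂} := subset_span (by simp)
  rw [← mem_signVectors] at h₁ h₂
  simp only [mem_insert, mem_singleton] at hv
  rcases hv with rfl | rfl | rfl | rfl
  exacts [⟨h₁, hv₁⟩, ⟨neg_mem_signVectors h₁, neg_mem hv₁⟩, ⟨h₂, hv₂⟩,
    ⟨neg_mem_signVectors h₂, neg_mem hv₂⟩]
end

/-- For even `m` and alphabet `{1, -1}`, the maximum number of pairwise
nonintersecting planes of `ℂ^m` generated by `±1`-vectors is exactly `2^(m-2)`. -/
theorem stmt_16 (m : ℕ) (hm : 2 ≤ m) (hme : Even m) :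
    IsGreatest {n : ℕ | ∃ S : Finset (Submodule ℂ (Fin m → ℂ)),
      S.card = n ∧
      (∀ W ∈ S, ∃ v1 v2 : Fin m → ℂ,
        (∀ i, v1 i = 1 ∨ v1 i = -1) ∧ (∀ i, v2 i = 1 ∨ v2 i = -1) ∧
        W = Submodule.span ℂ {v1, v2} ∧ Module.finrank ℂ W = 2) ∧
      (∀ W ∈ S, ∀ W' ∈ S, W ≠ W' → W ⊓ W' = ⊥)}
      (2 ^ (m - 2)) := by
  have h4 : 2 ^ m = 4 * 2 ^ (m - 2) := by
    rw [← pow_sub_mul_pow 2 hm]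
    ring
  refine ⟨?_, fun n ⟨S, hcard, hS⟩ => ?_⟩
  · obtain ⟨k, rfl⟩ : ∃ k, m = 2 * k + 2 := ⟨m / 2 - 1, by obtain ⟨t, rfl⟩ := hme; omega⟩
    obtain ⟨S, hcard, hS⟩ := exists_finset_card_eq_four_pow (K := ℂ) le_rfl
    refine ⟨S, ?_, hS⟩
    rw [hcard, show 2 * k + 2 - 2 = 2 * k by omega, pow_mul]
    norm_num
  · have := four_mul_card_le_two_pow (by omega) hS.1 hS.2
    omega
end

section
/- For the plane Π̃(a,b) in ℂ^{m+2} with generator matrix [v1, μ^a, μ^b; v2, μ^{a+b}, μ^{a+2b+1}], where v1, v2 span a plane Π in ℂ^m and μ is a primitive 2^r-th root of unity, the planes Π̃(a,b) and Π̃(c,d) are nonintersecting whenever (a,b) ≢ (c,d) mod 2^r. -/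
open Finset

namespace Stmt19


/-- divisibility within ℤ[μ] (elements viewed in ℂ) -/
def DD (μ x y : ℂ) : Prop := ∃ z ∈ Algebra.adjoin ℤ ({μ} : Set ℂ), y = x * z

variable {μ : ℂ} {r : ℕ}

lemma DD.trans {x y z : ℂ} (h1 : DD μ x y) (h2 : DD μ y z) : DD μ x z := by
  obtain ⟨u, hu, rfl⟩ := h1
  obtain ⟨v, hv, rfl⟩ := h2
  exact ⟨u * v, mul_mem hu hv, by ring⟩

lemma DD.mul {x y x' y' : ℂ} (h1 : DD μ x y) (h2 : DD μ x' y') :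
    DD μ (x * x') (y * y') := by
  obtain ⟨u, hu, rfl⟩ := h1
  obtain ⟨v, hv, rfl⟩ := h2
  exact ⟨u * v, mul_mem hu hv, by ring⟩

lemma mem_self : μ ∈ Algebra.adjoin ℤ ({μ} : Set ℂ) :=
  Algebra.self_mem_adjoin_singleton ℤ μ

lemma mem_pow (k : ℕ) : μ ^ k ∈ Algebra.adjoin ℤ ({μ} : Set ℂ) :=
  pow_mem mem_self k

lemma mem_one_sub_pow (k : ℕ) : 1 - μ ^ k ∈ Algebra.adjoin ℤ ({μ} : Set ℂ) :=
  sub_mem (one_mem _) (mem_pow k)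

lemma DD.refl (x : ℂ) : DD μ x x := ⟨1, one_mem _, (mul_one x).symm⟩

/-- `(1 - x) ∣ (1 - x^n)` for `x` a power of μ -/
lemma dvd_one_sub_pow (k n : ℕ) : DD μ (1 - μ ^ k) (1 - (μ ^ k) ^ n) := by
  refine ⟨∑ i ∈ range n, (μ ^ k) ^ i, ?_, ?_⟩
  · exact sum_mem fun i _ => pow_mem (mem_pow k) i
  · have := geom_sum_mul (μ ^ k) n
    linear_combination this

/-- If `2^j exactly divides k` and `2^r ∤ k`, then `1-μ^k` and `1-μ^(2^j)` are associates. -/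
lemma assoc1 (hμ : IsPrimitiveRoot μ (2 ^ r)) {k j : ℕ} (h1 : 2 ^ j ∣ k)
    (h2 : ¬ 2 ^ (j + 1) ∣ k) (hk : ¬ 2 ^ r ∣ k) :
    DD μ (1 - μ ^ (2 ^ j)) (1 - μ ^ k) ∧ DD μ (1 - μ ^ k) (1 - μ ^ (2 ^ j)) := by
  have hjr : j < r := by
    by_contra h
    exact hk (dvd_trans (pow_dvd_pow 2 (le_of_not_gt h)) h1)
  obtain ⟨m, rfl⟩ := h1
  have hm2 : ¬ 2 ∣ m := by
    rintro ⟨q, rfl⟩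
    exact h2 ⟨q, by ring⟩
  have hcop : Nat.Coprime m (2 ^ (r - j)) :=
    Nat.Coprime.pow_right _ (((Nat.prime_two.coprime_iff_not_dvd).mpr hm2).symm)
  obtain ⟨m', -, hm'⟩ := Nat.exists_mul_mod_eq_one_of_coprime hcop
    (by have : 0 < r - j := by omega
        calc 1 < 2 ^ 1 := by norm_num
        _ ≤ 2 ^ (r - j) := Nat.pow_le_pow_right (by norm_num) this)
  constructor
  · have : μ ^ (2 ^ j * m) = (μ ^ (2 ^ j)) ^ m := by rw [pow_mul]
    rw [this]; exact dvd_one_sub_pow _ m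
  · have key : (μ ^ (2 ^ j * m)) ^ m' = μ ^ (2 ^ j) := by
      rw [← pow_mul]
      have h1' : μ ^ (2 ^ r) = 1 := hμ.pow_eq_one
      have hq : m * m' = 2 ^ (r - j) * (m * m' / 2 ^ (r - j)) + 1 := by
        conv_lhs => rw [← Nat.div_add_mod (m * m') (2 ^ (r - j))]
        rw [hm']
      calc μ ^ (2 ^ j * m * m') = μ ^ (2 ^ j * (m * m')) := by ring_nf
        _ = μ ^ (2 ^ j * (2 ^ (r - j) * (m * m' / 2 ^ (r - j)) + 1)) := by rw [← hq]
        _ = (μ ^ (2 ^ r)) ^ (m * m' / 2 ^ (r - j)) * μ ^ (2 ^ j) := by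
            rw [← pow_mul, ← pow_add]
            congr 1
            have : 2 ^ j * 2 ^ (r - j) = 2 ^ r := by
              rw [← pow_add]; congr 1; omega
            ring_nf
            rw [← this]; ring
        _ = μ ^ (2 ^ j) := by rw [h1', one_pow, one_mul]
    have := dvd_one_sub_pow (μ := μ) (2 ^ j * m) m'
    rwa [key] at this

lemma pow_half_eq_neg_one (hμ : IsPrimitiveRoot μ (2 ^ r)) (hr : 1 ≤ r) :
    μ ^ (2 ^ (r - 1)) = -1 := by
  have hsq : (μ ^ (2 ^ (r - 1))) ^ 2 = 1 := by
    rw [← pow_mul]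
    have h2 : 2 ^ (r - 1) * 2 = 2 ^ r := by
      rw [← pow_succ]; congr 1; omega
    rw [h2, hμ.pow_eq_one]
  have hne : μ ^ (2 ^ (r - 1)) ≠ 1 :=
    hμ.pow_ne_one_of_pos_of_lt ((Nat.pow_pos (a := 2) (by norm_num)).ne')
      (Nat.pow_lt_pow_right (by norm_num) (by omega))
  rcases mul_eq_zero.mp (show (μ ^ (2 ^ (r-1)) - 1) * (μ ^ (2 ^ (r-1)) + 1) = 0 by
    linear_combination hsq) with h | h
  · exact absurd (sub_eq_zero.mp h) hne
  · exact eq_neg_of_add_eq_zero_left h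

/-- `(1-μ)^(2^j)` and `1-μ^(2^j)` are associates for `j < r`. -/
lemma assoc2 (hμ : IsPrimitiveRoot μ (2 ^ r)) (hr : 1 ≤ r) :
    ∀ j < r, DD μ ((1 - μ) ^ (2 ^ j)) (1 - μ ^ (2 ^ j)) ∧
      DD μ (1 - μ ^ (2 ^ j)) ((1 - μ) ^ (2 ^ j)) := by
  intro j
  induction j with
  | zero => intro _; simp only [pow_zero, pow_one]; exact ⟨DD.refl _, DD.refl _⟩
  | succ j ih =>
    intro hj1
    obtain ⟨ih1, ih2⟩ := ih (by omega)
    set e := 2 ^ (r - 1) + 2 ^ j with he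
    have h1 : 2 ^ j ∣ e := by
      refine ⟨2 ^ (r - 1 - j) + 1, ?_⟩
      rw [he, Nat.mul_add, mul_one, ← pow_add]
      congr 2
      omega
    have hpowlt : 2 ^ j < 2 ^ (j + 1) := Nat.pow_lt_pow_right (by norm_num) (by omega)
    have h2 : ¬ 2 ^ (j + 1) ∣ e := by
      intro hdvd
      have hd1 : 2 ^ (j + 1) ∣ 2 ^ (r - 1) := pow_dvd_pow 2 (by omega)
      have hd2 : 2 ^ (j + 1) ∣ 2 ^ j := by
        have := Nat.dvd_sub hdvd hd1
        simpa [he] using this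
      exact absurd (Nat.le_of_dvd (Nat.pow_pos (by norm_num)) hd2) (by omega)
    have hk : ¬ 2 ^ r ∣ e := by
      intro hdvd
      have h1e : e < 2 ^ r := by
        have : 2 ^ j < 2 ^ (r - 1) := Nat.pow_lt_pow_right (by norm_num) (by omega)
        have h2r : 2 ^ (r - 1) + 2 ^ (r - 1) = 2 ^ r := by
          rw [← two_mul, ← pow_succ']; congr 1; omega
        omega
      have := Nat.le_of_dvd (by positivity) hdvd
      omega
    obtain ⟨a1, a2⟩ := assoc1 hμ h1 h2 hk
    have idB : 1 - μ ^ e = 1 + μ ^ (2 ^ j) := by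
      rw [he, pow_add, pow_half_eq_neg_one hμ hr]
      ring
    have idA : 1 - μ ^ (2 ^ (j + 1)) = (1 - μ ^ (2 ^ j)) * (1 - μ ^ e) := by
      rw [idB]
      have : μ ^ (2 ^ (j + 1)) = (μ ^ (2 ^ j)) ^ 2 := by
        rw [← pow_mul, pow_succ]
      rw [this]; ring
    have idC : (1 - μ) ^ (2 ^ (j + 1)) = (1 - μ) ^ (2 ^ j) * (1 - μ) ^ (2 ^ j) := by
      rw [← pow_add]; congr 1; omega
    constructor
    · rw [idA, idC]
      exact DD.mul ih1 (DD.trans ih1 a1)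
    · rw [idA, idC]
      exact DD.mul ih2 (DD.trans a2 ih2)
lemma half_not_integral : ¬ IsIntegral ℤ ((2 : ℂ)⁻¹) := by
  intro h
  have h1 : ((2 : ℂ)⁻¹) = algebraMap ℚ ℂ ((2 : ℚ)⁻¹) := by
    push_cast
    norm_num
  rw [h1, isIntegral_algebraMap_iff ((algebraMap ℚ ℂ).injective)] at h
  obtain ⟨y, hy⟩ := IsIntegrallyClosed.isIntegral_iff.mp h
  have : (y : ℚ) = (2 : ℚ)⁻¹ := hy
  have h2 : ((2 * y : ℤ) : ℚ) = 1 := by push_cast [this]; norm_num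
  have : (2 * y : ℤ) = 1 := by exact_mod_cast h2
  omega

/-- main contradiction: `μ^C1 * T1 = μ^C2 * T2` with valuations `V1 < V2` is impossible. -/
lemma final' (hμ : IsPrimitiveRoot μ (2 ^ r)) (hr : 1 ≤ r) {T1 T2 : ℂ} {V1 V2 C1 C2 : ℕ}
    (h1 : DD μ T1 ((1 - μ) ^ V1)) (h2 : DD μ ((1 - μ) ^ V2) T2)
    (hV : V1 < V2) (E : μ ^ C1 * T1 = μ ^ C2 * T2) : False := by
  have hπ : (1 - μ) ≠ 0 := by
    have := hμ.ne_one (by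
      calc 1 < 2 ^ 1 := by norm_num
      _ ≤ 2 ^ r := Nat.pow_le_pow_right (by norm_num) hr)
    intro h
    exact this (by linear_combination -h)
  obtain ⟨z1, hz1, hz1e⟩ := h1
  obtain ⟨z2, hz2, hz2e⟩ := h2
  -- μ^C1 * (1-μ)^V1 = μ^C2 * (1-μ)^V2 * z2 * z1
  have E2 : μ ^ C1 * (1 - μ) ^ V1 = μ ^ C2 * (1 - μ) ^ V2 * z2 * z1 := by
    rw [hz2e] at E
    rw [hz1e]
    linear_combination z1 * E
  have hsplit : (1 - μ) ^ V2 = (1 - μ) ^ V1 * ((1 - μ) ^ (V2 - V1 - 1) * (1 - μ)) := by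
    rw [← pow_succ, ← pow_add]
    congr 1
    omega
  have E3 : μ ^ C1 = μ ^ C2 * ((1 - μ) ^ (V2 - V1 - 1) * (1 - μ)) * z2 * z1 := by
    have hne : (1 - μ) ^ V1 ≠ 0 := pow_ne_zero _ hπ
    field_simp at E2 ⊢
    rw [hsplit] at E2
    apply mul_right_cancel₀ hne
    linear_combination E2
  -- so 1 = (1-μ) * w  with w in the adjoin
  have hu : μ ^ C1 * μ ^ (C1 * (2 ^ r - 1)) = 1 := by
    rw [← pow_add]
    have : C1 + C1 * (2 ^ r - 1) = 2 ^ r * C1 := by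
      have : 1 ≤ 2 ^ r := Nat.one_le_two_pow
      cases Nat.eq_or_lt_of_le this with
      | _ h => nlinarith [Nat.sub_add_cancel this]
    rw [this, pow_mul, hμ.pow_eq_one, one_pow]
  set R := Algebra.adjoin ℤ ({μ} : Set ℂ) with hR
  have hμR : μ ∈ R := Algebra.self_mem_adjoin_singleton ℤ μ
  have hw : ∃ w ∈ R, 1 = (1 - μ) * w := by
    refine ⟨μ ^ (C1 * (2 ^ r - 1)) * (μ ^ C2 * (1 - μ) ^ (V2 - V1 - 1) * z2 * z1), ?_, ?_⟩
    · exact mul_mem (pow_mem hμR _) (mul_mem (mul_mem (mul_mem (pow_mem hμR _)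
        (pow_mem (sub_mem (one_mem _) hμR) _)) hz2) hz1)
    · calc (1:ℂ) = μ ^ (C1 * (2 ^ r - 1)) * μ ^ C1 := by rw [mul_comm, hu]
        _ = _ := by rw [E3]; ring
  obtain ⟨w, hwR, hwe⟩ := hw
  -- 2 divides 1 in R
  obtain ⟨z3, hz3, hz3e⟩ := (assoc2 hμ hr (r - 1) (by omega)).2
  rw [pow_half_eq_neg_one hμ hr] at hz3e
  have h2z3 : (1 - μ) ^ (2 ^ (r - 1)) = 2 * z3 := by
    rw [hz3e]; norm_num
  have hone : (1 : ℂ) = 2 * (z3 * w ^ (2 ^ (r - 1))) := by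
    calc (1:ℂ) = ((1 - μ) * w) ^ (2 ^ (r - 1)) := by rw [← hwe]; norm_num
      _ = (1 - μ) ^ (2 ^ (r - 1)) * w ^ (2 ^ (r - 1)) := by rw [mul_pow]
      _ = _ := by rw [h2z3]; ring
  have hyR : z3 * w ^ (2 ^ (r - 1)) ∈ R := mul_mem hz3 (pow_mem hwR _)
  have hyint : IsIntegral ℤ (z3 * w ^ (2 ^ (r - 1))) := by
    have hμint : IsIntegral ℤ μ := hμ.isIntegral (by positivity)
    exact adjoin_le_integralClosure hμint hyR
  have : z3 * w ^ (2 ^ (r - 1)) = (2 : ℂ)⁻¹ := by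
    field_simp
    linear_combination -hone
  rw [this] at hyint
  exact half_not_integral hyint



/-- exact 2-adic valuation -/
def Ev (x j : ℕ) : Prop := 2 ^ j ∣ x ∧ ¬ 2 ^ (j + 1) ∣ x

lemma Ev.exists {x : ℕ} (hx : x ≠ 0) : ∃ j, Ev x j :=
  ⟨x.factorization 2, Nat.ordProj_dvd x 2, Nat.pow_succ_factorization_not_dvd hx Nat.prime_two⟩

lemma Ev.le {x q m : ℕ} (hq : Ev x q) (hm : 2 ^ m ∣ x) : m ≤ q := by
  by_contra h
  exact hq.2 (dvd_trans (pow_dvd_pow 2 (by omega)) hm)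

lemma Ev.add_lt {x y i j : ℕ} (hx : Ev x i) (hy : Ev y j) (hij : i < j) : Ev (x + y) i := by
  refine ⟨dvd_add hx.1 (dvd_trans (pow_dvd_pow 2 hij.le) hy.1), fun h => hx.2 ?_⟩
  have h2 : 2 ^ (i + 1) ∣ y := dvd_trans (pow_dvd_pow 2 (by omega)) hy.1
  have := Nat.dvd_sub h h2
  simpa using this

lemma Ev.two_mul {y j : ℕ} (hy : Ev y j) : Ev (2 * y) (j + 1) := by
  constructor
  · rw [pow_succ']
    exact mul_dvd_mul_left 2 hy.1
  · rw [pow_succ']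
    rw [Nat.mul_dvd_mul_iff_left (by norm_num : 0 < 2)]
    exact hy.2

lemma Ev.add_eq {x y i : ℕ} (hx : Ev x i) (hy : Ev y i) : 2 ^ (i + 1) ∣ (x + y) := by
  obtain ⟨a, rfl⟩ := hx.1
  obtain ⟨b, rfl⟩ := hy.1
  have ha : ¬ 2 ∣ a := fun ⟨q, hq⟩ => hx.2 ⟨q, by rw [hq]; ring⟩
  have hb : ¬ 2 ∣ b := fun ⟨q, hq⟩ => hy.2 ⟨q, by rw [hq]; ring⟩
  have : 2 ∣ a + b := by omega
  obtain ⟨c, hc⟩ := this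
  exact ⟨c, by rw [← Nat.mul_add, hc, pow_succ]; ring⟩

lemma pow_lt {i j : ℕ} (h : i < j) : (2:ℕ) ^ i < 2 ^ j := Nat.pow_lt_pow_right (by norm_num) h

/-- the key combinatorial fact: valuations of the two products differ -/
lemma val_comb {s t i j : ℕ} (hs : Ev s i) (ht : Ev t j) (hst : s + t ≠ 0)
    (hs2t : s + 2 * t ≠ 0) :
    ∃ p q, Ev (s + 2 * t) p ∧ Ev (s + t) q ∧ 2 ^ i + 2 ^ p ≠ 2 ^ j + 2 ^ q := by
  have h2t : Ev (2 * t) (j + 1) := ht.two_mul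
  rcases lt_trichotomy i j with hij | rfl | hij
  · -- i < j
    refine ⟨i, i, hs.add_lt h2t (by omega), hs.add_lt ht hij, ?_⟩
    have := pow_lt hij
    omega
  · -- i = j
    obtain ⟨q, hq⟩ := Ev.exists hst
    have hqge : i + 1 ≤ q := hq.le (hs.add_eq ht)
    refine ⟨i, q, hs.add_lt h2t (by omega), hq, ?_⟩
    have := pow_lt (show i < q by omega)
    omega
  · -- j < i
    have hts : Ev (s + t) j := by rw [Nat.add_comm]; exact ht.add_lt hs hij
    rcases Nat.eq_or_lt_of_le hij with rfl | hij2
    case inl =>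
      -- i = j + 1
      obtain ⟨p, hp⟩ := Ev.exists hs2t
      have hpge : j + 2 ≤ p := hp.le (by
        have := Ev.add_eq hs h2t
        simpa using this)
      refine ⟨p, j, hp, hts, ?_⟩
      have h1 := pow_lt (show j < j + 1 by omega)
      have h2 := pow_lt (show j + 1 < p by omega)
      omega
    case inr =>
      refine ⟨j + 1, j, by rw [Nat.add_comm]; exact h2t.add_lt hs hij2, hts, ?_⟩
      have h1 := pow_lt (show j < j + 1 by omega)
      have h2 := pow_lt (show j + 1 < i by omega)
      omega


lemma mutDD {μ : ℂ} {r : ℕ} (hμ : IsPrimitiveRoot μ (2 ^ r)) (hr : 1 ≤ r) {k m : ℕ}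
    (he : Ev k m) (hk : ¬ 2 ^ r ∣ k) :
    DD μ ((1 - μ) ^ (2 ^ m)) (1 - μ ^ k) ∧ DD μ (1 - μ ^ k) ((1 - μ) ^ (2 ^ m)) := by
  have hmr : m < r := by
    by_contra h
    exact hk (dvd_trans (pow_dvd_pow 2 (by omega)) he.1)
  obtain ⟨b1, b2⟩ := assoc2 hμ hr m hmr
  obtain ⟨a1, a2⟩ := assoc1 hμ he.1 he.2 hk
  exact ⟨DD.trans b1 a1, DD.trans a2 b2⟩

theorem key {μ : ℂ} {r : ℕ} (hμ : IsPrimitiveRoot μ (2 ^ r)) (hr : 1 ≤ r)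
    (s t C1 C2 : ℕ) (hst : ¬ (2 ^ r ∣ s ∧ 2 ^ r ∣ t)) :
    μ ^ C1 * ((1 - μ ^ s) * (1 - μ ^ (s + 2 * t))) ≠
      μ ^ C2 * ((1 - μ ^ t) * (1 - μ ^ (s + t))) := by
  intro E
  have hone : ∀ k, μ ^ k = 1 ↔ 2 ^ r ∣ k := hμ.pow_eq_one_iff_dvd
  have hμ0 : μ ≠ 0 := hμ.ne_zero (by positivity)
  have hnz : ∀ k, ¬ 2 ^ r ∣ k → 1 - μ ^ k ≠ 0 := by
    intro k h hk
    exact h ((hone k).mp (by linear_combination -hk))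
  have hzero : ∀ k, 2 ^ r ∣ k → 1 - μ ^ k = 0 := by
    intro k h
    rw [(hone k).mpr h]; ring
  by_cases hs : 2 ^ r ∣ s
  · have ht : ¬ 2 ^ r ∣ t := fun h => hst ⟨hs, h⟩
    have hst' : ¬ 2 ^ r ∣ s + t := by
      intro h
      have := Nat.dvd_sub h hs
      simp only [Nat.add_sub_cancel_left] at this
      exact ht this
    rw [hzero s hs] at E
    simp only [zero_mul, mul_zero] at E
    exact (mul_ne_zero (pow_ne_zero _ hμ0)
      (mul_ne_zero (hnz t ht) (hnz _ hst'))) E.symm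
  · by_cases ht : 2 ^ r ∣ t
    · have hs2t : ¬ 2 ^ r ∣ s + 2 * t := by
        intro h
        have h2t : 2 ^ r ∣ 2 * t := Dvd.dvd.mul_left ht 2
        have := Nat.dvd_sub h h2t
        simp only [Nat.add_sub_cancel] at this
        exact hs this
      rw [hzero t ht] at E
      simp only [zero_mul, mul_zero] at E
      exact (mul_ne_zero (pow_ne_zero _ hμ0)
        (mul_ne_zero (hnz s hs) (hnz _ hs2t))) E
    · by_cases hs2t : 2 ^ r ∣ s + 2 * t
      · have hst' : ¬ 2 ^ r ∣ s + t := by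
          intro h
          have := Nat.dvd_sub hs2t h
          simp only [show s + 2 * t - (s + t) = t by omega] at this
          exact ht this
        rw [hzero _ hs2t] at E
        simp only [mul_zero] at E
        exact (mul_ne_zero (pow_ne_zero _ hμ0)
          (mul_ne_zero (hnz t ht) (hnz _ hst'))) E.symm
      · by_cases hst' : 2 ^ r ∣ s + t
        · rw [hzero _ hst'] at E
          simp only [mul_zero] at E
          exact (mul_ne_zero (pow_ne_zero _ hμ0)
            (mul_ne_zero (hnz s hs) (hnz _ hs2t))) E
        · -- main case
          have hs0 : s ≠ 0 := by rintro rfl; exact hs (dvd_zero _)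
          have ht0 : t ≠ 0 := by rintro rfl; exact ht (dvd_zero _)
          obtain ⟨i, hi⟩ := Ev.exists hs0
          obtain ⟨j, hj⟩ := Ev.exists ht0
          obtain ⟨p, q, hp, hq, hV⟩ := val_comb hi hj (by omega) (by omega)
          obtain ⟨m1a, m1b⟩ := mutDD hμ hr hi hs
          obtain ⟨m2a, m2b⟩ := mutDD hμ hr hp hs2t
          obtain ⟨m3a, m3b⟩ := mutDD hμ hr hj ht
          obtain ⟨m4a, m4b⟩ := mutDD hμ hr hq hst'
          have pow1 : ((1 - μ) ^ (2 ^ i)) * ((1 - μ) ^ (2 ^ p)) = (1 - μ) ^ (2 ^ i + 2 ^ p) :=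
            (pow_add _ _ _).symm
          have pow2 : ((1 - μ) ^ (2 ^ j)) * ((1 - μ) ^ (2 ^ q)) = (1 - μ) ^ (2 ^ j + 2 ^ q) :=
            (pow_add _ _ _).symm
          rcases Nat.lt_or_ge (2 ^ i + 2 ^ p) (2 ^ j + 2 ^ q) with hlt | hge
          · have h1 : DD μ ((1 - μ ^ s) * (1 - μ ^ (s + 2 * t))) ((1 - μ) ^ (2 ^ i + 2 ^ p)) := by
              rw [← pow1]; exact DD.mul m1b m2b
            have h2 : DD μ ((1 - μ) ^ (2 ^ j + 2 ^ q)) ((1 - μ ^ t) * (1 - μ ^ (s + t))) := by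
              rw [← pow2]; exact DD.mul m3a m4a
            exact final' hμ hr h1 h2 hlt E
          · have hlt2 : 2 ^ j + 2 ^ q < 2 ^ i + 2 ^ p := by omega
            have h1 : DD μ ((1 - μ ^ t) * (1 - μ ^ (s + t))) ((1 - μ) ^ (2 ^ j + 2 ^ q)) := by
              rw [← pow2]; exact DD.mul m3b m4b
            have h2 : DD μ ((1 - μ) ^ (2 ^ i + 2 ^ p)) ((1 - μ ^ s) * (1 - μ ^ (s + 2 * t))) := by
              rw [← pow1]; exact DD.mul m1a m2a
            exact final' hμ hr h1 h2 hlt2 E.symm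

end Stmt19

/-- The planes `Π̃(a,b) ⊆ ℂ^(m+2)` with generator matrix
`[v1, μ^a, μ^b; v2, μ^(a+b), μ^(a+2b+1)]` are pairwise nonintersecting for
distinct `(a,b)` with `0 ≤ a, b < 2^r`. -/
theorem stmt_19 (r m : ℕ) (hr : 1 ≤ r) (μ : ℂ) (hμ : IsPrimitiveRoot μ (2 ^ r))
    (v1 v2 : Fin m → ℂ) (hv : LinearIndependent ℂ ![v1, v2])
    (a b c d : ℕ) (ha : a < 2 ^ r) (hb : b < 2 ^ r) (hc : c < 2 ^ r)
    (hd : d < 2 ^ r) (hne : (a, b) ≠ (c, d)) :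
    LinearMap.range (Matrix.of fun i => Fin.append (![v1, v2] i)
        (![![μ ^ a, μ ^ b], ![μ ^ (a + b), μ ^ (a + 2 * b + 1)]] i)).vecMulLinear ⊓
    LinearMap.range (Matrix.of fun i => Fin.append (![v1, v2] i)
        (![![μ ^ c, μ ^ d], ![μ ^ (c + d), μ ^ (c + 2 * d + 1)]] i)).vecMulLinear
      = ⊥ := by
  have hNpos : 0 < 2 ^ r := by positivity
  -- the difference exponents
  set s := (a + 2 ^ r - c) % 2 ^ r with hs_def
  set t := (b + 2 ^ r - d) % 2 ^ r with ht_def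
  have hshift : ∀ u w : ℕ, w < 2 ^ r →
      μ ^ u = μ ^ w * μ ^ ((u + 2 ^ r - w) % 2 ^ r) := by
    intro u w hw
    have hmodpow : ∀ k : ℕ, μ ^ k = μ ^ (k % 2 ^ r) := by
      intro k
      conv_lhs => rw [← Nat.div_add_mod k (2 ^ r)]
      rw [pow_add, pow_mul, hμ.pow_eq_one, one_pow, one_mul]
    rw [← pow_add, hmodpow u, hmodpow (w + (u + 2 ^ r - w) % 2 ^ r)]
    congr 1
    show Nat.ModEq _ _ _
    have h1 : (u + 2 ^ r - w) % 2 ^ r ≡ u + 2 ^ r - w [MOD 2 ^ r] := Nat.mod_modEq _ _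
    have h2 : w + (u + 2 ^ r - w) % 2 ^ r ≡ w + (u + 2 ^ r - w) [MOD 2 ^ r] := h1.add_left w
    have h3 : w + (u + 2 ^ r - w) = u + 2 ^ r := by omega
    have h4 : u + 2 ^ r ≡ u [MOD 2 ^ r] := by
      have : (2 ^ r) % (2 ^ r) = 0 % (2 ^ r) := by simp
      simpa using (Nat.ModEq.add_left u this)
    exact ((h2.trans (by rw [h3])).trans h4).symm
  have hA : μ ^ a = μ ^ c * μ ^ s := hshift a c hc
  have hB : μ ^ b = μ ^ d * μ ^ t := hshift b d hd
  have hslt : s < 2 ^ r := Nat.mod_lt _ hNpos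
  have htlt : t < 2 ^ r := Nat.mod_lt _ hNpos
  have hstne : ¬ (2 ^ r ∣ s ∧ 2 ^ r ∣ t) := by
    rintro ⟨h1, h2⟩
    have hs0 : s = 0 := Nat.eq_zero_of_dvd_of_lt h1 hslt
    have ht0 : t = 0 := Nat.eq_zero_of_dvd_of_lt h2 htlt
    rw [hs0] at hA
    rw [ht0] at hB
    simp only [pow_zero, mul_one] at hA hB
    exact hne (Prod.ext (hμ.pow_inj ha hc hA) (hμ.pow_inj hb hd hB))
  -- auxiliary power identities
  have hAB : μ ^ (a + b) = μ ^ (c + d) * μ ^ (s + t) := by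
    rw [pow_add, pow_add, pow_add, hA, hB]; ring
  have hAB2 : μ ^ (a + 2 * b + 1) = μ ^ (c + 2 * d + 1) * μ ^ (s + 2 * t) := by
    have ea : a + 2 * b + 1 = a + (b + b) + 1 := by omega
    have ec : c + 2 * d + 1 = c + (d + d) + 1 := by omega
    have et : s + 2 * t = s + (t + t) := by omega
    rw [ea, ec, et]
    simp only [pow_add, pow_one]
    rw [hA, hB]; ring
  -- the nonvanishing determinant
  have hDne : (μ ^ c * μ ^ (c + 2 * d + 1)) * ((1 - μ ^ s) * (1 - μ ^ (s + 2 * t))) -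
      (μ ^ d * μ ^ (c + d)) * ((1 - μ ^ t) * (1 - μ ^ (s + t))) ≠ 0 := by
    intro h
    have h1 : μ ^ c * μ ^ (c + 2 * d + 1) = μ ^ (2 * c + 2 * d + 1) := by
      rw [← pow_add]; congr 1; omega
    have h2 : μ ^ d * μ ^ (c + d) = μ ^ (c + 2 * d) := by
      rw [← pow_add]; congr 1; omega
    rw [h1, h2] at h
    exact Stmt19.key hμ hr s t (2 * c + 2 * d + 1) (c + 2 * d) hstne (sub_eq_zero.mp h)
  rw [eq_bot_iff]
  intro x hx
  obtain ⟨hx1, hx2⟩ := hx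
  obtain ⟨pv, hpv⟩ := hx1
  obtain ⟨qv, hqv⟩ := hx2
  have hcoord : ∀ (w : Fin 2 → ℂ) (M : Matrix (Fin 2) (Fin (m + 2)) ℂ) (jdx : Fin (m + 2)),
      M.vecMulLinear w jdx = w 0 * M 0 jdx + w 1 * M 1 jdx := by
    intro w M jdx
    simp [Matrix.vecMulLinear_apply, Matrix.vecMul, dotProduct, Fin.sum_univ_two]
  -- first m coordinates
  have hm : ∀ jm : Fin m, (pv 0 - qv 0) * v1 jm + (pv 1 - qv 1) * v2 jm = 0 := by
    intro jm
    have h1 := congrFun hpv (Fin.castAdd 2 jm)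
    have h2 := congrFun hqv (Fin.castAdd 2 jm)
    rw [hcoord] at h1 h2
    simp only [Matrix.of_apply, Matrix.cons_val_zero, Matrix.cons_val_one, Matrix.head_cons,
      Fin.append_left] at h1 h2
    linear_combination h1 - h2
  have hli := Fintype.linearIndependent_iff.mp hv ![pv 0 - qv 0, pv 1 - qv 1]
  have hsum : ∑ i : Fin 2, (![pv 0 - qv 0, pv 1 - qv 1]) i • (![v1, v2]) i = 0 := by
    funext jm
    simp only [Fin.sum_univ_two, Matrix.cons_val_zero, Matrix.cons_val_one, Matrix.head_cons,
      Pi.add_apply, Pi.smul_apply, smul_eq_mul, Pi.zero_apply]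
    exact hm jm
  have hq0 : qv 0 = pv 0 := by
    have h0 := hli hsum 0
    simp only [Matrix.cons_val_zero] at h0
    linear_combination -h0
  have hq1 : qv 1 = pv 1 := by
    have h1 := hli hsum 1
    simp only [Matrix.cons_val_one, Matrix.head_cons, Matrix.cons_val_zero] at h1
    linear_combination -h1
  -- last two coordinates
  have hA1 : pv 0 * μ ^ a + pv 1 * μ ^ (a + b) = pv 0 * μ ^ c + pv 1 * μ ^ (c + d) := by
    have h1 := congrFun hpv (Fin.natAdd m (0 : Fin 2))
    have h2 := congrFun hqv (Fin.natAdd m (0 : Fin 2))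
    rw [hcoord] at h1 h2
    simp only [Matrix.of_apply, Matrix.cons_val_zero, Matrix.cons_val_one, Matrix.head_cons,
      Fin.append_right] at h1 h2
    rw [hq0, hq1] at h2
    linear_combination h1 - h2
  have hA2 : pv 0 * μ ^ b + pv 1 * μ ^ (a + 2 * b + 1) =
      pv 0 * μ ^ d + pv 1 * μ ^ (c + 2 * d + 1) := by
    have h1 := congrFun hpv (Fin.natAdd m (1 : Fin 2))
    have h2 := congrFun hqv (Fin.natAdd m (1 : Fin 2))
    rw [hcoord] at h1 h2
    simp only [Matrix.of_apply, Matrix.cons_val_zero, Matrix.cons_val_one, Matrix.head_cons,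
      Fin.append_right] at h1 h2
    rw [hq0, hq1] at h2
    linear_combination h1 - h2
  rw [hA, hAB] at hA1
  rw [hB, hAB2] at hA2
  have hp0 : pv 0 = 0 := by
    have hz : pv 0 * ((μ ^ c * μ ^ (c + 2 * d + 1)) * ((1 - μ ^ s) * (1 - μ ^ (s + 2 * t))) -
        (μ ^ d * μ ^ (c + d)) * ((1 - μ ^ t) * (1 - μ ^ (s + t)))) = 0 := by
      linear_combination (μ ^ (c + 2 * d + 1) * (μ ^ (s + 2 * t) - 1)) * hA1 -
        (μ ^ (c + d) * (μ ^ (s + t) - 1)) * hA2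
    rcases mul_eq_zero.mp hz with h | h
    · exact h
    · exact absurd h hDne
  have hp1 : pv 1 = 0 := by
    have hz : pv 1 * ((μ ^ c * μ ^ (c + 2 * d + 1)) * ((1 - μ ^ s) * (1 - μ ^ (s + 2 * t))) -
        (μ ^ d * μ ^ (c + d)) * ((1 - μ ^ t) * (1 - μ ^ (s + t)))) = 0 := by
      linear_combination (μ ^ c * (μ ^ s - 1)) * hA2 - (μ ^ d * (μ ^ t - 1)) * hA1
    rcases mul_eq_zero.mp hz with h | h
    · exact h
    · exact absurd h hDne
  rw [Submodule.mem_bot, ← hpv]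
  funext jdx
  rw [hcoord, hp0, hp1]
  simp
end
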